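/- arXiv:2509.13222 — 7 statements merged into one kernel-verified Lean document; each statement's English description precedes it below -/
import Mathlib

section
/- Let A be a positive-definite symmetric real d×d matrix, let f, g : ℝ^d → ℝ be continuous, and let δ : (0,∞) → (0,1] satisfy √ε / δ(ε) → 0 as ε → 0⁺. Then lim_{ε→0⁺} (2πε)^{-d/2} ∫_{B_{δ(ε)}} e^{-(x·Ax)/(2ε)} · g(x/δ(ε)) · f(x) dx = g(0)·f(0) / √(det A). -/
/-!
Substituting `x = √ε • y` turns the integral into
`(2π)^{-d/2} ∫_{B_{δ/√ε}} e^{-y·Ay/2} g((√ε/δ) y) f(√ε y) dy`. The radii `δ/√ε` tend to `∞`, while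
the arguments of `g` and `f` stay in the unit ball and tend to `0`, so dominated convergence against
the integrable Gaussian `e^{-y·Ay/2}` gives `g(0) f(0) ∫ e^{-y·Ay/2} dy`. That Gaussian integral is
`(2π)^{d/2} / √(det A)`, by the substitution `z = A^{1/2} y`.
-/

open Filter Topology MeasureTheory Matrix Metric
-- `CFC.sqrt` on matrices needs their partial order and their C⋆-algebra (operator) norm.
open scoped MatrixOrder Matrix.Norms.L2Operator Pointwise

theorem integral_comp_linearMap {E F : Type*} [NormedAddCommGroup E] [NormedSpace ℝ E]
    [MeasurableSpace E] [BorelSpace E] [FiniteDimensional ℝ E] [NormedAddCommGroup F]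
    [NormedSpace ℝ F] (μ : Measure E) [μ.IsAddHaarMeasure] {L : E →ₗ[ℝ] E}
    (hL : LinearMap.det L ≠ 0) (G : E → F) :
    ∫ x, G (L x) ∂μ = |(LinearMap.det L)⁻¹| • ∫ y, G y ∂μ := by
  let e : E ≃ᵐ E :=
    (LinearMap.equivOfDetNeZero L hL).toContinuousLinearEquiv.toHomeomorph.toMeasurableEquiv
  calc ∫ x, G (L x) ∂μ = ∫ y, G y ∂(μ.map e) := (integral_map_equiv e G).symm
    _ = |(LinearMap.det L)⁻¹| • ∫ y, G y ∂μ := by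
      rw [show μ.map e = μ.map L from rfl, Measure.map_linearMap_addHaar_eq_smul_addHaar μ hL,
        integral_smul_measure, ENNReal.toReal_ofReal (abs_nonneg _)]

theorem smul_closedBall_zero_div {E : Type*} [NormedAddCommGroup E] [NormedSpace ℝ E] {s : ℝ}
    (hs : 0 < s) (r : ℝ) : s • closedBall (0 : E) (r / s) = closedBall 0 r := by
  rw [smul_closedBall' hs.ne', smul_zero, Real.norm_of_nonneg hs.le, mul_div_cancel₀ _ hs.ne']

theorem exists_norm_comp_inv_smul_mul_le {E : Type*} [NormedAddCommGroup E] [NormedSpace ℝ E]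
    [ProperSpace E] {f g : E → ℝ} (hf : Continuous f) (hg : Continuous g) :
    ∃ C, ∀ t ∈ Set.Ioc (0 : ℝ) 1, ∀ z ∈ closedBall (0 : E) t, ‖g (t⁻¹ • z) * f z‖ ≤ C := by
  obtain ⟨Cg, hCg⟩ := (isCompact_closedBall (0 : E) 1).exists_bound_of_continuousOn hg.continuousOn
  obtain ⟨Cf, hCf⟩ := (isCompact_closedBall (0 : E) 1).exists_bound_of_continuousOn hf.continuousOn
  refine ⟨Cg * Cf, fun t ⟨ht0, ht1⟩ z hz => ?_⟩
  rw [mem_closedBall_zero_iff] at hz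
  have hgz : ‖t⁻¹ • z‖ ≤ 1 := by
    rw [norm_smul, Real.norm_of_nonneg (inv_nonneg.2 ht0.le)]
    exact inv_mul_le_one_of_le₀ hz ht0.le
  rw [norm_mul]
  exact mul_le_mul (hCg _ (mem_closedBall_zero_iff.2 hgz))
    (hCf _ (mem_closedBall_zero_iff.2 (hz.trans ht1))) (norm_nonneg _)
    ((norm_nonneg _).trans (hCg 0 (mem_closedBall_self zero_le_one)))

theorem tendsto_div_sqrt_nhdsGT_zero_atTop {δ : ℝ → ℝ} (hδ : ∀ ε : ℝ, 0 < ε → 0 < δ ε)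
    (hlim : Tendsto (fun ε => √ε / δ ε) (𝓝[>] 0) (𝓝 0)) :
    Tendsto (fun ε => δ ε / √ε) (𝓝[>] 0) atTop := by
  have h : Tendsto (fun ε => √ε / δ ε) (𝓝[>] 0) (𝓝[>] 0) := tendsto_nhdsWithin_iff.2
    ⟨hlim, eventually_nhdsWithin_of_forall fun ε hε => div_pos (Real.sqrt_pos.2 hε) (hδ ε hε)⟩
  simpa only [Function.comp_def, inv_div] using tendsto_inv_nhdsGT_zero.comp h

theorem tendsto_setIntegral_closedBall_mul {α E : Type*} [NormedAddCommGroup E]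
    [MeasurableSpace E] [OpensMeasurableSpace E] {μ : Measure E} {l : Filter α}
    [l.IsCountablyGenerated] {w : E → ℝ} {F : α → E → ℝ} {F₀ : E → ℝ} {R : α → ℝ} {C : ℝ}
    (hw : Integrable w μ) (hR : Tendsto R l atTop)
    (hF_meas : ∀ᶠ a in l, AEStronglyMeasurable (F a) μ)
    (hF_bound : ∀ᶠ a in l, ∀ y ∈ closedBall 0 (R a), ‖F a y‖ ≤ C)
    (hF_lim : ∀ y, Tendsto (fun a => F a y) l (𝓝 (F₀ y))) :
    Tendsto (fun a => ∫ y in closedBall 0 (R a), w y * F a y ∂μ) l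
      (𝓝 (∫ y, w y * F₀ y ∂μ)) := by
  simp_rw [← integral_indicator measurableSet_closedBall]
  refine tendsto_integral_filter_of_dominated_convergence (fun y => |C| * ‖w y‖) ?_ ?_
    (hw.norm.const_mul _) (Eventually.of_forall fun y => ?_)
  · filter_upwards [hF_meas] with a ha
    exact (hw.aestronglyMeasurable.mul ha).indicator measurableSet_closedBall
  · filter_upwards [hF_bound] with a ha
    refine Eventually.of_forall fun y => ?_
    by_cases hy : y ∈ closedBall 0 (R a)
    · rw [Set.indicator_of_mem hy, norm_mul, mul_comm]
      exact mul_le_mul_of_nonneg_right ((ha y hy).trans (le_abs_self C)) (norm_nonneg _)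
    · rw [Set.indicator_of_notMem hy, norm_zero]
      positivity
  · refine (tendsto_const_nhds.mul (hF_lim y)).congr' ?_
    filter_upwards [hR.eventually_ge_atTop ‖y‖] with a ha
    rw [Set.indicator_of_mem (mem_closedBall_zero_iff.2 ha)]

section QuadForm

variable {ι : Type*} [Fintype ι]

def quadForm (A : Matrix ι ι ℝ) (x : EuclideanSpace ℝ ι) : ℝ :=
  ∑ i, ∑ j, x i * A i j * x j

theorem quadForm_eq_dotProduct (A : Matrix ι ι ℝ) (x : EuclideanSpace ℝ ι) :
    quadForm A x = x.ofLp ⬝ᵥ A *ᵥ x.ofLp := by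
  simp only [quadForm, dotProduct, mulVec, Finset.mul_sum]
  exact Finset.sum_congr rfl fun i _ => Finset.sum_congr rfl fun j _ => by ring

theorem quadForm_smul (A : Matrix ι ι ℝ) (c : ℝ) (x : EuclideanSpace ℝ ι) :
    quadForm A (c • x) = c ^ 2 * quadForm A x := by
  simp only [quadForm, PiLp.smul_apply, smul_eq_mul, Finset.mul_sum]
  exact Finset.sum_congr rfl fun i _ => Finset.sum_congr rfl fun j _ => by ring

theorem quadForm_eq_norm_sq_sqrt [DecidableEq ι] {A : Matrix ι ι ℝ} (hA : A.PosSemidef)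
    (x : EuclideanSpace ℝ ι) :
    quadForm A x = ‖toEuclideanLin (CFC.sqrt A) x‖ ^ 2 := by
  have hS : (CFC.sqrt A)ᵀ = CFC.sqrt A := by
    simpa using (Matrix.nonneg_iff_posSemidef.mp (CFC.sqrt_nonneg A)).isHermitian.eq
  rw [← real_inner_self_eq_norm_sq, toLpLin_apply, EuclideanSpace.inner_eq_star_dotProduct]
  simp only [quadForm_eq_dotProduct, star_trivial, dotProduct_mulVec, vecMul_mulVec, hS,
    CFC.sqrt_mul_sqrt_self A hA.nonneg]

theorem integral_exp_neg_quadForm_div_two [DecidableEq ι] {A : Matrix ι ι ℝ} (hA : A.PosDef) :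
    ∫ x, Real.exp (-quadForm A x / 2) =
      (2 * Real.pi) ^ (Fintype.card ι / 2 : ℝ) / Real.sqrt A.det := by
  have hdetS : (CFC.sqrt A).det = Real.sqrt A.det := by simpa using hA.posSemidef.det_sqrt
  have hdet : LinearMap.det (toEuclideanLin (CFC.sqrt A)) ≠ 0 := by
    rw [LinearMap.det_toLpLin, hdetS]
    exact (Real.sqrt_pos.2 hA.det_pos).ne'
  have hstd : ∫ v : EuclideanSpace ℝ ι, Real.exp (-(1 / 2) * ‖v‖ ^ 2) =
      (2 * Real.pi) ^ (Fintype.card ι / 2 : ℝ) := by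
    rw [GaussianFourier.integral_rexp_neg_mul_sq_norm (by norm_num), finrank_euclideanSpace]
    ring_nf
  calc ∫ x, Real.exp (-quadForm A x / 2)
      = ∫ x, (fun v => Real.exp (-(1 / 2) * ‖v‖ ^ 2)) (toEuclideanLin (CFC.sqrt A) x) := by
        simp_rw [quadForm_eq_norm_sq_sqrt hA.posSemidef]
        ring_nf
    _ = (2 * Real.pi) ^ (Fintype.card ι / 2 : ℝ) / Real.sqrt A.det := by
      rw [integral_comp_linearMap volume hdet (fun v => Real.exp (-(1 / 2) * ‖v‖ ^ 2)),
        LinearMap.det_toLpLin, hdetS, hstd, smul_eq_mul,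
        abs_of_pos (inv_pos.2 (Real.sqrt_pos.2 hA.det_pos)), inv_mul_eq_div]

theorem integrable_exp_neg_quadForm_div_two [DecidableEq ι] {A : Matrix ι ι ℝ}
    (hA : A.PosDef) : Integrable fun x => Real.exp (-quadForm A x / 2) := by
  refine Integrable.of_integral_ne_zero ?_
  rw [integral_exp_neg_quadForm_div_two hA]
  have := hA.det_pos
  positivity

theorem setIntegral_closedBall_exp_neg_quadForm_rescale (A : Matrix ι ι ℝ)
    (φ : EuclideanSpace ℝ ι → ℝ) {ε : ℝ} (hε : 0 < ε) (r : ℝ) :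
    (2 * Real.pi * ε) ^ (-(Fintype.card ι : ℝ) / 2) *
        ∫ x in closedBall 0 r, Real.exp (-quadForm A x / (2 * ε)) * φ x =
      (2 * Real.pi) ^ (-(Fintype.card ι : ℝ) / 2) *
        ∫ y in closedBall 0 (r / √ε), Real.exp (-quadForm A y / 2) * φ (√ε • y) := by
  have hs : 0 < √ε := Real.sqrt_pos.2 hε
  have hexp : ∀ y, -quadForm A (√ε • y) / (2 * ε) = -quadForm A y / 2 := fun y => by
    rw [quadForm_smul, Real.sq_sqrt hε.le]
    field_simp
  have hpow : (2 * Real.pi * ε) ^ (-(Fintype.card ι : ℝ) / 2) =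
      (2 * Real.pi) ^ (-(Fintype.card ι : ℝ) / 2) * (√ε ^ Fintype.card ι)⁻¹ := by
    rw [Real.mul_rpow (by positivity) hε.le, Real.sqrt_eq_rpow, ← Real.rpow_natCast,
      ← Real.rpow_mul hε.le, ← Real.rpow_neg hε.le]
    ring_nf
  simp_rw [← hexp]
  rw [Measure.setIntegral_comp_smul_of_pos _ (fun x => Real.exp (-quadForm A x / (2 * ε)) * φ x)
    _ hs, smul_closedBall_zero_div hs, finrank_euclideanSpace, hpow, smul_eq_mul, mul_assoc]

end QuadForm

/-- Gaussian scaling lemma: for `A` positive definite, `f, g` continuous and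
`√ε/δ(ε) → 0` with `δ(ε) ∈ (0,1]`,
`(2πε)^{-d/2} ∫_{B_{δ(ε)}} e^{-x·Ax/(2ε)} g(x/δ(ε)) f(x) dx → g(0) f(0)/√(det A)`. -/
theorem stmt2 {d : ℕ}
    (A : Matrix (Fin d) (Fin d) ℝ) (hA : A.PosDef)
    (f g : EuclideanSpace ℝ (Fin d) → ℝ) (hf : Continuous f) (hg : Continuous g)
    (δ : ℝ → ℝ) (hδ : ∀ ε : ℝ, 0 < ε → δ ε ∈ Set.Ioc (0:ℝ) 1)
    (hlim : Tendsto (fun ε => Real.sqrt ε / δ ε) (𝓝[>] (0:ℝ)) (𝓝 0)) :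
    Tendsto (fun ε =>
        (2 * Real.pi * ε) ^ (-(d : ℝ) / 2) *
          ∫ x in Metric.closedBall (0 : EuclideanSpace ℝ (Fin d)) (δ ε),
            Real.exp (-(∑ i, ∑ j, x i * A i j * x j) / (2 * ε)) *
              g ((δ ε)⁻¹ • x) * f x)
      (𝓝[>] (0:ℝ)) (𝓝 (g 0 * f 0 / Real.sqrt A.det)) := by
  have hpos : ∀ᶠ ε in 𝓝[>] (0 : ℝ), 0 < ε := self_mem_nhdsWithin
  obtain ⟨C, hC⟩ := exists_norm_comp_inv_smul_mul_le hf hg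
  have hbound : ∀ᶠ ε in 𝓝[>] 0, ∀ y ∈ closedBall 0 (δ ε / √ε),
      ‖g ((δ ε)⁻¹ • √ε • y) * f (√ε • y)‖ ≤ C := by
    filter_upwards [hpos] with ε hε y hy
    refine hC _ (hδ ε hε) _ ?_
    rw [← smul_closedBall_zero_div (Real.sqrt_pos.2 hε)]
    exact Set.smul_mem_smul_set hy
  have hconv : ∀ y, Tendsto (fun ε => g ((δ ε)⁻¹ • √ε • y) * f (√ε • y)) (𝓝[>] 0)
      (𝓝 (g 0 * f 0)) := fun y => by
    have hsqrt : Tendsto (fun ε => √ε • y) (𝓝[>] 0) (𝓝 0) := by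
      simpa using ((Real.continuous_sqrt.tendsto 0).mono_left nhdsWithin_le_nhds).smul_const y
    have hscaled : Tendsto (fun ε => (δ ε)⁻¹ • √ε • y) (𝓝[>] 0) (𝓝 0) := by
      simpa [smul_smul, div_eq_inv_mul] using hlim.smul_const y
    exact ((hg.tendsto 0).comp hscaled).mul ((hf.tendsto 0).comp hsqrt)
  have hval : (2 * Real.pi) ^ (-(d : ℝ) / 2) *
      ∫ y, Real.exp (-quadForm A y / 2) * (g 0 * f 0) = g 0 * f 0 / Real.sqrt A.det := by
    rw [integral_mul_const, integral_exp_neg_quadForm_div_two hA, Fintype.card_fin, neg_div,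
      Real.rpow_neg (by positivity)]
    field_simp
  refine hval ▸ ((tendsto_setIntegral_closedBall_mul (integrable_exp_neg_quadForm_div_two hA)
    (tendsto_div_sqrt_nhdsGT_zero_atTop (fun ε hε => (hδ ε hε).1) hlim)
    (Eventually.of_forall fun ε => (by fun_prop : Continuous _).aestronglyMeasurable)
    hbound hconv).const_mul _).congr' ?_
  filter_upwards [hpos] with ε hε
  simpa only [Fintype.card_fin, mul_assoc, quadForm] using
    (setIntegral_closedBall_exp_neg_quadForm_rescale A (fun x => g ((δ ε)⁻¹ • x) * f x) hε
      (δ ε)).symm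
end

section
/- Let A be a positive-definite symmetric real d×d matrix, let δ : (0,∞) → (0,1] satisfy √ε / δ(ε) → 0 as ε → 0⁺, and let h : ℝ^d → ℝ be continuously differentiable with ∇h(0) = 0. Then lim_{ε→0⁺} (ε/δ(ε)²) · (2πε)^{-d/2} ∫_{B_{δ(ε)}} e^{-(x·Ax)/(2ε)} · |∇h(x/δ(ε))|² dx = 0. -/
open Filter Topology MeasureTheory

/-! Positive definiteness gives `x·Ax ≥ c|x|²`, so the weight `e^{-x·Ax/(2ε)}` is dominated by
`e^{-c|x|²/(2ε)}`, whose integral over `ℝ^d` is `(2πε/c)^{d/2}`. As `x/δ(ε)` stays in the unit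
ball, where `|∇h|²` is bounded by some `M`, the normalized integral is at most `M c^{-d/2}` for
every `ε`, and the prefactor `ε/δ(ε)² = (√ε/δ(ε))²` tends to `0`. -/

theorem ContDiff.continuous_gradient {𝕜 F : Type*} [RCLike 𝕜] [NormedAddCommGroup F]
    [InnerProductSpace 𝕜 F] [CompleteSpace F] {f : F → 𝕜} (hf : ContDiff 𝕜 1 f) :
    Continuous (gradient f) :=
  (InnerProductSpace.toDual 𝕜 F).symm.continuous.comp (hf.continuous_fderiv one_ne_zero)

theorem exists_pos_mul_sq_norm_le_of_homogeneous {V : Type*} [NormedAddCommGroup V]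
    [NormedSpace ℝ V] [FiniteDimensional ℝ V] {Q : V → ℝ} (hQ : Continuous Q)
    (hQ_pos : ∀ x, x ≠ 0 → 0 < Q x) (hQ_smul : ∀ (a : ℝ) x, Q (a • x) = a ^ 2 * Q x) :
    ∃ c > 0, ∀ x, c * ‖x‖ ^ 2 ≤ Q x := by
  have hQ_zero : Q 0 = 0 := by simpa using hQ_smul 0 0
  rcases subsingleton_or_nontrivial V with hV | hV
  · exact ⟨1, one_pos, fun x => by simp [Subsingleton.elim x 0, hQ_zero]⟩
  obtain ⟨x₀, hx₀, hmin⟩ := (isCompact_sphere (0 : V) 1).exists_isMinOn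
    (NormedSpace.sphere_nonempty.mpr zero_le_one) hQ.continuousOn
  have hx₀_ne : x₀ ≠ 0 := ne_zero_of_mem_unit_sphere ⟨x₀, hx₀⟩
  refine ⟨Q x₀, hQ_pos x₀ hx₀_ne, fun x => ?_⟩
  rcases eq_or_ne x 0 with rfl | hx
  · simp [hQ_zero]
  have hnorm : 0 < ‖x‖ := norm_pos_iff.mpr hx
  have hunit : ‖x‖⁻¹ • x ∈ Metric.sphere (0 : V) 1 := by
    simp [norm_smul, hnorm.ne']
  calc Q x₀ * ‖x‖ ^ 2 ≤ Q (‖x‖⁻¹ • x) * ‖x‖ ^ 2 := by gcongr; exact hmin hunit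
    _ = Q x := by rw [hQ_smul, inv_pow]; field_simp

theorem Matrix.PosDef.exists_pos_mul_sq_norm_le {n : Type*} [Fintype n]
    {A : Matrix n n ℝ} (hA : A.PosDef) :
    ∃ c > 0, ∀ x : EuclideanSpace ℝ n, c * ‖x‖ ^ 2 ≤ ∑ i, ∑ j, x i * A i j * x j := by
  refine exists_pos_mul_sq_norm_le_of_homogeneous (by fun_prop) (fun x hx => ?_) fun a x => ?_
  · have hx' : (x : n → ℝ) ≠ 0 := fun h0 => hx (by ext i; exact congrFun h0 i)
    simpa [dotProduct, Matrix.mulVec, Finset.mul_sum, mul_assoc] using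
      hA.dotProduct_mulVec_pos hx'
  · simp only [PiLp.smul_apply, smul_eq_mul, Finset.mul_sum]
    exact Finset.sum_congr rfl fun i _ => Finset.sum_congr rfl fun j _ => by ring

section Gaussian

variable {V : Type*} [NormedAddCommGroup V] [InnerProductSpace ℝ V] [FiniteDimensional ℝ V]
  [MeasurableSpace V] [BorelSpace V]

theorem integrable_rexp_neg_mul_sq_norm {b : ℝ} (hb : 0 < b) :
    Integrable fun x : V => Real.exp (-b * ‖x‖ ^ 2) := by
  refine Integrable.of_integral_ne_zero ?_
  rw [GaussianFourier.integral_rexp_neg_mul_sq_norm hb]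
  exact (Real.rpow_pos_of_pos (by positivity) _).ne'

theorem rpow_mul_setIntegral_exp_neg_div_mul_le {Q g : V → ℝ} {s : Set V} {c ε M : ℝ}
    (hc : 0 < c) (hε : 0 < ε) (hQ : ∀ x, c * ‖x‖ ^ 2 ≤ Q x) (hM : 0 ≤ M)
    (hg_nonneg : ∀ x ∈ s, 0 ≤ g x) (hg_le : ∀ x ∈ s, g x ≤ M) (hs : MeasurableSet s) :
    (2 * Real.pi * ε) ^ (-(Module.finrank ℝ V : ℝ) / 2) *
        ∫ x in s, Real.exp (-Q x / (2 * ε)) * g x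
      ≤ M * c ^ (-(Module.finrank ℝ V : ℝ) / 2) := by
  set b := c / (2 * ε)
  have hb : 0 < b := by positivity
  have hpointwise : ∀ x ∈ s, Real.exp (-Q x / (2 * ε)) * g x ≤ M * Real.exp (-b * ‖x‖ ^ 2) := by
    intro x hx
    rw [mul_comm M]
    refine mul_le_mul (Real.exp_le_exp.mpr ?_) (hg_le x hx) (hg_nonneg x hx) (Real.exp_nonneg _)
    rw [show -b * ‖x‖ ^ 2 = -(c * ‖x‖ ^ 2) / (2 * ε) by ring]
    gcongr
    exact hQ x
  have hI : ∫ x in s, Real.exp (-Q x / (2 * ε)) * g x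
      ≤ M * (2 * Real.pi * ε / c) ^ ((Module.finrank ℝ V : ℝ) / 2) :=
    calc ∫ x in s, Real.exp (-Q x / (2 * ε)) * g x
        ≤ ∫ x in s, M * Real.exp (-b * ‖x‖ ^ 2) :=
          integral_mono_of_nonneg ((ae_restrict_iff' hs).mpr (.of_forall fun x hx => by
              have := hg_nonneg x hx; positivity))
            ((integrable_rexp_neg_mul_sq_norm hb).const_mul M).integrableOn
            ((ae_restrict_iff' hs).mpr (.of_forall hpointwise))
      _ ≤ ∫ x, M * Real.exp (-b * ‖x‖ ^ 2) :=
          setIntegral_le_integral ((integrable_rexp_neg_mul_sq_norm hb).const_mul M)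
            (.of_forall fun x => by positivity)
      _ = M * (2 * Real.pi * ε / c) ^ ((Module.finrank ℝ V : ℝ) / 2) := by
          rw [integral_const_mul, GaussianFourier.integral_rexp_neg_mul_sq_norm hb]
          congr 2
          simp only [b]
          field_simp
  have h2πε : 0 < 2 * Real.pi * ε := by positivity
  calc (2 * Real.pi * ε) ^ (-(Module.finrank ℝ V : ℝ) / 2) *
        ∫ x in s, Real.exp (-Q x / (2 * ε)) * g x
      ≤ (2 * Real.pi * ε) ^ (-(Module.finrank ℝ V : ℝ) / 2) *
          (M * (2 * Real.pi * ε / c) ^ ((Module.finrank ℝ V : ℝ) / 2)) := by gcongr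
    _ = M * c ^ (-(Module.finrank ℝ V : ℝ) / 2) := by
      rw [Real.div_rpow h2πε.le hc.le, neg_div, Real.rpow_neg h2πε.le, Real.rpow_neg hc.le]
      have : (2 * Real.pi * ε) ^ ((Module.finrank ℝ V : ℝ) / 2) ≠ 0 := by positivity
      field_simp

end Gaussian

theorem stmt4_general {d : ℕ}
    (A : Matrix (Fin d) (Fin d) ℝ) (hA : A.PosDef)
    (δ : ℝ → ℝ) (hδ : ∀ ε : ℝ, 0 < ε → δ ε ∈ Set.Ioc (0:ℝ) 1)
    (hlim : Tendsto (fun ε => Real.sqrt ε / δ ε) (𝓝[>] (0:ℝ)) (𝓝 0))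
    (h : EuclideanSpace ℝ (Fin d) → ℝ) (hh : ContDiff ℝ 1 h) :
    Tendsto (fun ε =>
        ε / (δ ε) ^ 2 * (2 * Real.pi * ε) ^ (-(d : ℝ) / 2) *
          ∫ x in Metric.closedBall (0 : EuclideanSpace ℝ (Fin d)) (δ ε),
            Real.exp (-(∑ i, ∑ j, x i * A i j * x j) / (2 * ε)) *
              ‖gradient h ((δ ε)⁻¹ • x)‖ ^ 2)
      (𝓝[>] (0:ℝ)) (𝓝 0) := by
  obtain ⟨c, hc, hQ⟩ := hA.exists_pos_mul_sq_norm_le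
  obtain ⟨C, hC⟩ := (isCompact_closedBall (0 : EuclideanSpace ℝ (Fin d)) 1).exists_bound_of_continuousOn
    hh.continuous_gradient.continuousOn
  have hbound : ∀ ε, 0 < ε →
      ε / (δ ε) ^ 2 * (2 * Real.pi * ε) ^ (-(d : ℝ) / 2) *
          ∫ x in Metric.closedBall (0 : EuclideanSpace ℝ (Fin d)) (δ ε),
            Real.exp (-(∑ i, ∑ j, x i * A i j * x j) / (2 * ε)) *
              ‖gradient h ((δ ε)⁻¹ • x)‖ ^ 2
        ≤ (Real.sqrt ε / δ ε) ^ 2 * (C ^ 2 * c ^ (-(d : ℝ) / 2)) := by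
    intro ε hε
    obtain ⟨hδ_pos, -⟩ := hδ ε hε
    have hrescale : ∀ x ∈ Metric.closedBall (0 : EuclideanSpace ℝ (Fin d)) (δ ε),
        ‖gradient h ((δ ε)⁻¹ • x)‖ ^ 2 ≤ C ^ 2 := by
      intro x hx
      refine pow_le_pow_left₀ (norm_nonneg _) (hC _ ?_) 2
      rw [mem_closedBall_zero_iff, norm_smul, norm_inv, Real.norm_of_nonneg hδ_pos.le]
      exact inv_mul_le_one_of_le₀ (mem_closedBall_zero_iff.mp hx) hδ_pos.le
    have hgauss := rpow_mul_setIntegral_exp_neg_div_mul_le hc hε hQ (sq_nonneg C)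
      (fun x _ => sq_nonneg ‖gradient h ((δ ε)⁻¹ • x)‖) hrescale measurableSet_closedBall
    rw [finrank_euclideanSpace_fin] at hgauss
    rw [mul_assoc, div_pow, Real.sq_sqrt hε.le]
    gcongr
  refine squeeze_zero' ?_ ?_ (by simpa using (hlim.pow 2).mul_const (C ^ 2 * c ^ (-(d : ℝ) / 2)))
  · filter_upwards [self_mem_nhdsWithin] with ε (hε : 0 < ε)
    have hδ_pos := (hδ ε hε).1
    exact mul_nonneg (by positivity) (integral_nonneg fun x => by positivity)
  · filter_upwards [self_mem_nhdsWithin] with ε hε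
    exact hbound ε hε

/-- Gaussian gradient scaling lemma: for `A` positive definite, `√ε/δ(ε) → 0` with
`δ(ε) ∈ (0,1]` and `h` a `C¹` function with `∇h(0) = 0`,
`(ε/δ(ε)²)(2πε)^{-d/2} ∫_{B_{δ(ε)}} e^{-x·Ax/(2ε)} |∇h(x/δ(ε))|² dx → 0`. -/
theorem stmt4 {d : ℕ}
    (A : Matrix (Fin d) (Fin d) ℝ) (hA : A.PosDef)
    (δ : ℝ → ℝ) (hδ : ∀ ε : ℝ, 0 < ε → δ ε ∈ Set.Ioc (0:ℝ) 1)
    (hlim : Tendsto (fun ε => Real.sqrt ε / δ ε) (𝓝[>] (0:ℝ)) (𝓝 0))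
    (h : EuclideanSpace ℝ (Fin d) → ℝ) (hh : ContDiff ℝ 1 h)
    (hgrad0 : gradient h 0 = 0) :
    Tendsto (fun ε =>
        ε / (δ ε) ^ 2 * (2 * Real.pi * ε) ^ (-(d : ℝ) / 2) *
          ∫ x in Metric.closedBall (0 : EuclideanSpace ℝ (Fin d)) (δ ε),
            Real.exp (-(∑ i, ∑ j, x i * A i j * x j) / (2 * ε)) *
              ‖gradient h ((δ ε)⁻¹ • x)‖ ^ 2)
      (𝓝[>] (0:ℝ)) (𝓝 0) :=
  stmt4_general A hA δ hδ hlim h hh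
end

section
/- Let x₀ ∈ ℝ^d and let V : ℝ^d → ℝ be continuous with V(x₀) = 0, V(y) > 0 for all y ≠ x₀, and V(y) ≥ |y|² for all |y| ≥ R for some R > 0. Then for every ε > 0 the integral Z(ε) := ∫_{ℝ^d} e^{-V(y)/ε} dy is finite and positive, and the probability measures μ_ε(dy) := Z(ε)^{-1} e^{-V(y)/ε} dy converge weakly to the Dirac measure δ_{x₀} as ε → 0⁺; that is, for every bounded continuous f : ℝ^d → ℝ, lim_{ε→0⁺} ∫_{ℝ^d} f dμ_ε = f(x₀). -/
/-!
Laplace's principle. Since `V ≥ ‖y‖² - R²` everywhere, `e^{-V/ε}` is dominated by a Gaussian.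
Off any ball `B(x₀, δ)` the potential is bounded below by some `m > 0` (by compactness inside
the ball of radius `R`, by growth outside it), while on a small ball around `x₀` it is at most
`m / 4`. So the mass of `e^{-V/ε}` off `B(x₀, δ)`, relative to its total mass, is
`O(e^{-m/(4ε)})`: the normalized weights form an approximate identity at `x₀`.
-/

open Filter Topology MeasureTheory Metric Real

theorem integrable_exp_neg_div_of_sq_norm_sub_le {E : Type*} [NormedAddCommGroup E]
    [InnerProductSpace ℝ E] [FiniteDimensional ℝ E] [MeasurableSpace E] [BorelSpace E]
    {V : E → ℝ} (hV : AEStronglyMeasurable V) {c : ℝ} (hc : ∀ y, ‖y‖ ^ 2 - c ≤ V y)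
    {ε : ℝ} (hε : 0 < ε) : Integrable (fun y => exp (-V y / ε)) := by
  have hgauss : Integrable (fun y : E => exp (c / ε) * exp (-ε⁻¹ * ‖y‖ ^ 2)) := by
    refine Integrable.const_mul ?_ _
    refine (GaussianFourier.integrable_cexp_neg_mul_sq_norm_add (V := E) (b := (ε⁻¹ : ℂ))
      (by simpa using hε) 0 0).norm.congr (ae_of_all _ fun y => ?_)
    simp [Complex.norm_exp, ← Complex.ofReal_pow]
  refine hgauss.mono' (by fun_prop) (ae_of_all _ fun y => ?_)
  rw [Real.norm_of_nonneg (exp_pos _).le, ← exp_add]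
  gcongr
  rw [show c / ε + -ε⁻¹ * ‖y‖ ^ 2 = -((‖y‖ ^ 2 - c) / ε) by ring, neg_div]
  exact neg_le_neg (div_le_div_of_nonneg_right (hc y) hε.le)

theorem Continuous.exists_pos_forall_le_of_le_off_isCompact {X : Type*} [TopologicalSpace X]
    {V : X → ℝ} (hV : Continuous V) {s K : Set X} (hs : IsClosed s) (hK : IsCompact K)
    (hpos : ∀ y ∈ s, 0 < V y) {c : ℝ} (hc : 0 < c) (hout : ∀ y ∉ K, c ≤ V y) :
    ∃ m > 0, ∀ y ∈ s, m ≤ V y := by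
  obtain ⟨m, hm, hmin⟩ :=
    (hK.inter_left hs).exists_forall_le' hV.continuousOn fun y hy => hpos y hy.1
  refine ⟨min m c, lt_min hm hc, fun y hy => ?_⟩
  by_cases hyK : y ∈ K
  · exact (min_le_left _ _).trans (hmin y ⟨hy, hyK⟩)
  · exact (min_le_right _ _).trans (hout y hyK)

theorem tendsto_setIntegral_exp_neg_div_div_integral {X : Type*} [PseudoMetricSpace X]
    [ProperSpace X] [MeasurableSpace X] [BorelSpace X] {μ : Measure X}
    [IsFiniteMeasureOnCompacts μ] [μ.IsOpenPosMeasure] {V : X → ℝ} {x₀ : X}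
    (hV : ContinuousAt V x₀) (hV0 : V x₀ = 0)
    (hint : ∀ ε > 0, Integrable (fun x => exp (-V x / ε)) μ)
    {s : Set X} (hs : MeasurableSet s) {m : ℝ} (hm : 0 < m) (hVs : ∀ x ∈ s, m ≤ V x) :
    Tendsto (fun ε => (∫ x in s, exp (-V x / ε) ∂μ) / ∫ x, exp (-V x / ε) ∂μ)
      (𝓝[>] 0) (𝓝 0) := by
  obtain ⟨r, hr, hVr⟩ : ∃ r > 0, ∀ x ∈ ball x₀ r, V x ≤ m / 4 := by
    have := hV.eventually (Iic_mem_nhds (show V x₀ < m / 4 by linarith))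
    exact Metric.eventually_nhds_iff_ball.1 this
  set v := μ.real (ball x₀ r)
  have hv : 0 < v := ENNReal.toReal_pos (measure_ball_pos μ x₀ hr).ne' measure_ball_lt_top.ne
  set C := ∫ x, exp (-V x / 2) ∂μ
  have hZ : ∀ ε > 0, exp (-(m / 4) / ε) * v ≤ ∫ x, exp (-V x / ε) ∂μ := fun ε hε =>
    calc exp (-(m / 4) / ε) * v ≤ ∫ x in ball x₀ r, exp (-V x / ε) ∂μ :=
          setIntegral_ge_of_const_le_real measurableSet_ball measure_ball_lt_top.ne
            (fun x hx => by gcongr; exact hVr x hx) (hint ε hε).integrableOn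
      _ ≤ ∫ x, exp (-V x / ε) ∂μ :=
          setIntegral_le_integral (hint ε hε) (ae_of_all _ fun _ => (exp_pos _).le)
  have htail : ∀ ε > 0, ε ≤ 1 → ∫ x in s, exp (-V x / ε) ∂μ ≤ exp (-(m / 2) / ε) * C :=
    fun ε hε hε1 =>
    calc ∫ x in s, exp (-V x / ε) ∂μ ≤ ∫ x in s, exp (-(m / 2) / ε) * exp (-V x / 2) ∂μ := by
          refine setIntegral_mono_on (hint ε hε).integrableOn
            ((hint 2 two_pos).const_mul _).integrableOn hs fun x hx => ?_
          rw [← exp_add]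
          gcongr
          -- on `s`, `V / ε = V / (2ε) + V / (2ε) ≥ m / (2ε) + V / 2` as `ε ≤ 1`
          have := hVs x hx
          rw [div_add_div _ _ hε.ne' two_ne_zero, div_le_div_iff₀ hε (by positivity)]
          nlinarith [mul_nonneg hε.le (sub_nonneg.2 this),
            mul_nonneg (mul_nonneg hε.le (hm.le.trans this)) (sub_nonneg.2 hε1)]
      _ ≤ ∫ x, exp (-(m / 2) / ε) * exp (-V x / 2) ∂μ :=
          setIntegral_le_integral ((hint 2 two_pos).const_mul _)
            (ae_of_all _ fun _ => by positivity)
      _ = exp (-(m / 2) / ε) * C := integral_const_mul _ _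
  have hlim : Tendsto (fun ε => C / v * exp (-(m / 4) / ε)) (𝓝[>] 0) (𝓝 0) := by
    have hdiv : Tendsto (fun ε => m / 4 / ε) (𝓝[>] 0) atTop := by
      simpa only [div_eq_mul_inv] using tendsto_inv_nhdsGT_zero.const_mul_atTop (by positivity)
    simpa only [neg_div, mul_zero, Function.comp_def] using
      (tendsto_exp_neg_atTop_nhds_zero.comp hdiv).const_mul (C / v)
  refine tendsto_of_tendsto_of_tendsto_of_le_of_le' tendsto_const_nhds hlim
    (Eventually.of_forall fun ε => div_nonneg (integral_nonneg fun _ => (exp_pos _).le)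
      (integral_nonneg fun _ => (exp_pos _).le)) ?_
  filter_upwards [Ioc_mem_nhdsGT zero_lt_one] with ε ⟨hε, hε1⟩
  calc (∫ x in s, exp (-V x / ε) ∂μ) / ∫ x, exp (-V x / ε) ∂μ
      ≤ exp (-(m / 2) / ε) * C / (exp (-(m / 4) / ε) * v) :=
        div_le_div₀ (mul_nonneg (exp_pos _).le (integral_nonneg fun _ => (exp_pos _).le))
          (htail ε hε hε1) (by positivity) (hZ ε hε)
    _ = C / v * exp (-(m / 4) / ε) := by
        rw [show -(m / 2) / ε = -(m / 4) / ε + -(m / 4) / ε by ring, exp_add]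
        field_simp

theorem abs_integral_mul_div_integral_sub_le {X : Type*} [MeasurableSpace X] {μ : Measure X}
    {ρ : X → ℝ} (hρ : ∀ x, 0 ≤ ρ x) (hint : Integrable ρ μ) (hZ : 0 < ∫ x, ρ x ∂μ)
    {f : X → ℝ} (hfm : AEStronglyMeasurable f μ) {M : ℝ} (hM : ∀ x, |f x| ≤ M)
    {x₀ : X} {U : Set X} (hU : MeasurableSet U) {η : ℝ} (hη : 0 ≤ η)
    (hfU : ∀ x ∈ U, |f x - f x₀| ≤ η) :
    |(∫ x, f x * ρ x ∂μ) / (∫ x, ρ x ∂μ) - f x₀| ≤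
      η + 2 * M * ((∫ x in Uᶜ, ρ x ∂μ) / ∫ x, ρ x ∂μ) := by
  set Z := ∫ x, ρ x ∂μ
  have hfρ : Integrable (fun x => f x * ρ x) μ :=
    hint.bdd_mul hfm (ae_of_all _ fun x => by simpa only [Real.norm_eq_abs] using hM x)
  have hcentre : (∫ x, f x * ρ x ∂μ) / Z - f x₀ = (∫ x, (f x - f x₀) * ρ x ∂μ) / Z := by
    simp_rw [sub_mul]
    rw [integral_sub hfρ (hint.const_mul _), integral_const_mul, sub_div,
      mul_div_cancel_right₀ _ hZ.ne']
  have hdom : Integrable (fun x => η * ρ x + 2 * M * Uᶜ.indicator ρ x) μ :=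
    (hint.const_mul _).add ((hint.indicator hU.compl).const_mul _)
  have hbound : |∫ x, (f x - f x₀) * ρ x ∂μ| ≤ η * Z + 2 * M * ∫ x in Uᶜ, ρ x ∂μ := by
    calc |∫ x, (f x - f x₀) * ρ x ∂μ|
        ≤ ∫ x, (η * ρ x + 2 * M * Uᶜ.indicator ρ x) ∂μ := by
          rw [← Real.norm_eq_abs]
          refine norm_integral_le_of_norm_le hdom (ae_of_all _ fun x => ?_)
          rw [Real.norm_eq_abs, abs_mul, abs_of_nonneg (hρ x)]
          by_cases hx : x ∈ U
          · rw [Set.indicator_of_notMem (Set.notMem_compl_iff.2 hx)]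
            nlinarith [hfU x hx, hρ x]
          · rw [Set.indicator_of_mem (Set.mem_compl hx)]
            have : |f x - f x₀| ≤ 2 * M := (abs_sub _ _).trans (by linarith [hM x, hM x₀])
            nlinarith [hρ x]
      _ = η * Z + 2 * M * ∫ x in Uᶜ, ρ x ∂μ := by
          rw [integral_add (hint.const_mul _) ((hint.indicator hU.compl).const_mul _),
            integral_const_mul, integral_const_mul, integral_indicator hU.compl]
  calc |(∫ x, f x * ρ x ∂μ) / Z - f x₀| = |∫ x, (f x - f x₀) * ρ x ∂μ| / Z := by
        rw [hcentre, abs_div, abs_of_pos hZ]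
    _ ≤ (η * Z + 2 * M * ∫ x in Uᶜ, ρ x ∂μ) / Z := by gcongr
    _ = η + 2 * M * ((∫ x in Uᶜ, ρ x ∂μ) / Z) := by field_simp

theorem tendsto_integral_mul_div_integral_of_tendsto_setIntegral_compl_ball {ι X : Type*}
    {l : Filter ι} [PseudoMetricSpace X] [MeasurableSpace X] [OpensMeasurableSpace X]
    {μ : Measure X} {ρ : ι → X → ℝ} {x₀ : X} (hρ : ∀ i x, 0 ≤ ρ i x)
    (hint : ∀ᶠ i in l, Integrable (ρ i) μ) (hpos : ∀ᶠ i in l, 0 < ∫ x, ρ i x ∂μ)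
    (hconc : ∀ δ > 0,
      Tendsto (fun i => (∫ x in (ball x₀ δ)ᶜ, ρ i x ∂μ) / ∫ x, ρ i x ∂μ) l (𝓝 0))
    {f : X → ℝ} (hf : ContinuousAt f x₀) (hfm : AEStronglyMeasurable f μ) {M : ℝ}
    (hM : ∀ x, |f x| ≤ M) :
    Tendsto (fun i => (∫ x, f x * ρ i x ∂μ) / ∫ x, ρ i x ∂μ) l (𝓝 (f x₀)) := by
  rw [Metric.tendsto_nhds]
  intro η hη
  obtain ⟨δ, hδ, hfδ⟩ := Metric.continuousAt_iff.1 hf (η / 2) (half_pos hη)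
  have htail := (hconc δ hδ).const_mul (2 * M)
  rw [mul_zero] at htail
  filter_upwards [hint, hpos, htail.eventually (gt_mem_nhds (half_pos hη))] with i hi hZ hT
  rw [Real.dist_eq]
  calc _ ≤ η / 2 + 2 * M * ((∫ x in (ball x₀ δ)ᶜ, ρ i x ∂μ) / ∫ x, ρ i x ∂μ) :=
        abs_integral_mul_div_integral_sub_le (hρ i) hi hZ hfm hM measurableSet_ball
          (half_pos hη).le fun x hx => (Real.dist_eq _ _ ▸ hfδ hx).le
    _ < η := by linarith

/-- The normalized measures `μ_ε ∝ e^{-V/ε} dy` are well defined and converge weakly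
to the Dirac measure at the unique zero `x₀` of the nonnegative potential `V`. -/
theorem stmt6 {d : ℕ}
    (V : EuclideanSpace ℝ (Fin d) → ℝ) (hV : Continuous V)
    (x₀ : EuclideanSpace ℝ (Fin d))
    (hV0 : V x₀ = 0) (hVpos : ∀ y, y ≠ x₀ → 0 < V y)
    (hVgrow : ∃ R : ℝ, 0 < R ∧ ∀ y : EuclideanSpace ℝ (Fin d), R ≤ ‖y‖ → ‖y‖ ^ 2 ≤ V y) :
    (∀ ε : ℝ, 0 < ε →
        Integrable (fun y => Real.exp (-V y / ε)) ∧
        0 < ∫ y, Real.exp (-V y / ε)) ∧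
    ∀ f : EuclideanSpace ℝ (Fin d) → ℝ, Continuous f → (∃ M : ℝ, ∀ y, |f y| ≤ M) →
      Tendsto (fun ε =>
          (∫ y, f y * Real.exp (-V y / ε)) / ∫ y, Real.exp (-V y / ε))
        (𝓝[>] (0:ℝ)) (𝓝 (f x₀)) := by
  obtain ⟨R, hR, hgrow⟩ := hVgrow
  have hVnn : ∀ y, 0 ≤ V y := fun y =>
    (eq_or_ne y x₀).elim (fun h => h ▸ hV0.ge) fun h => (hVpos y h).le
  have hquad : ∀ y, ‖y‖ ^ 2 - R ^ 2 ≤ V y := fun y => by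
    rcases le_or_gt R ‖y‖ with h | h
    · linarith [hgrow y h, sq_nonneg R]
    · nlinarith [hVnn y, norm_nonneg y]
  have hint : ∀ ε > 0, Integrable (fun y => exp (-V y / ε)) := fun ε hε =>
    integrable_exp_neg_div_of_sq_norm_sub_le hV.aestronglyMeasurable hquad hε
  refine ⟨fun ε hε => ⟨hint ε hε, integral_exp_pos (hint ε hε)⟩, fun f hf ⟨M, hM⟩ => ?_⟩
  refine tendsto_integral_mul_div_integral_of_tendsto_setIntegral_compl_ball
    (fun _ _ => (exp_pos _).le) (eventually_mem_nhdsWithin.mono hint)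
    (eventually_mem_nhdsWithin.mono fun ε hε => integral_exp_pos (hint ε hε))
    (fun δ hδ => ?_) hf.continuousAt hf.aestronglyMeasurable hM
  obtain ⟨m, hm, hVm⟩ := hV.exists_pos_forall_le_of_le_off_isCompact isOpen_ball.isClosed_compl
    (isCompact_closedBall 0 R) (fun y hy => hVpos y (by rintro rfl; exact hy (mem_ball_self hδ)))
    (pow_pos hR 2) fun y hy => by
      have hRy : R < ‖y‖ := by simpa using hy
      exact (pow_le_pow_left₀ hR.le hRy.le 2).trans (hgrow y hRy.le)
  exact tendsto_setIntegral_exp_neg_div_div_integral hV.continuousAt hV0 hint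
    measurableSet_ball.compl hm hVm
end

section
/- Let U : ℝ^d → ℝ be twice continuously differentiable and suppose: (i) for every a ∈ ℝ there exists a finite constant C_a such that ∫_{{U ≥ a}} e^{-U(x)/ε} dx ≤ C_a e^{-a/ε} for every ε > 0; (ii) there exist C > 0 and a compact set K ⊂ ℝ^d such that ‖∇²U(x)‖ ≤ C|∇U(x)|² for all x ∉ K, where ‖·‖ is the operator norm of the Hessian matrix; (iii) U(x) → ∞ as |x| → ∞; and (iv) the set of critical points of U (zeros of ∇U) is bounded. Then there exists ε₀ > 0 such that for every ε ∈ (0, ε₀), the functions |∇U|⁴ e^{-U/ε} and (ΔU)² e^{-U/ε} are Lebesgue integrable on ℝ^d; equivalently, |∇U|² and ΔU belong to L²(dπ_ε), where π_ε is the probability measure proportional to e^{-U/ε}dx. -/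
open Filter Topology MeasureTheory InnerProductSpace Set Real ContinuousLinearMap

/-!
Where `∇U ≠ 0`, the bound `‖∇²U‖ ≤ C|∇U|²` says exactly that `1/|∇U|` is `C`-Lipschitz. So an
explicit gradient-descent step `x ↦ x - τ∇U(x)` of length `1/(8C|∇U(x)|)` keeps `∇U` almost
constant, lowers `U` by `1/(16C)`, and changes `|∇U|` by at most the factor `exp(2C ΔU)`.
Outside a large ball there are no critical points, hence no minimisers of `U`, so finitely many
such steps lead into the ball; this gives `|∇U(x)| ≤ M exp(2C(U(x) - min U))`, and then
`‖∇²U(x)‖ ≤ A exp(4C(U(x) - min U))`. Hence `|∇U|⁴` and `(ΔU)²` grow at most like `exp(8CU)`,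
which the weight `e^{-U/ε}` absorbs for `ε < 1/(8C)`, because the tail assumption makes
`e^{-U/ε'}` integrable for every `ε' > 0`.
-/

theorem sq_le_sq_mul_exp {a A t : ℝ} (h : |a| ≤ A * exp t) : a ^ 2 ≤ A ^ 2 * exp (2 * t) :=
  calc a ^ 2 = |a| ^ 2 := (sq_abs a).symm
    _ ≤ (A * exp t) ^ 2 := pow_le_pow_left₀ (abs_nonneg a) h 2
    _ = A ^ 2 * exp (2 * t) := by rw [mul_pow, ← exp_nat_mul]; norm_num

theorem ContinuousOn.exists_first_le {φ : ℝ → ℝ} {a b R : ℝ} (hφ : ContinuousOn φ (Icc a b))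
    (ha : R ≤ φ a) (hhit : ∃ s ∈ Icc a b, φ s ≤ R) :
    ∃ s ∈ Icc a b, φ s ≤ R ∧ ∀ t ∈ Icc a s, R ≤ φ t := by
  set S := Icc a b ∩ φ ⁻¹' Iic R
  have hS : IsClosed S := hφ.preimage_isClosed_of_isClosed isClosed_Icc isClosed_Iic
  have hbdd : BddBelow S := ⟨a, fun s hs => hs.1.1⟩
  obtain ⟨⟨has₀, hs₀b⟩, hs₀R⟩ : sInf S ∈ S := hS.csInf_mem hhit hbdd
  have hfirst : ∀ t ∈ Icc a (sInf S), φ t ≤ R → t = sInf S := fun t ht htR =>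
    le_antisymm ht.2 (csInf_le hbdd ⟨⟨ht.1, ht.2.trans hs₀b⟩, htR⟩)
  have hs₀ : R ≤ φ (sInf S) := by
    by_contra! hlt
    obtain ⟨t, ht, htR⟩ :=
      intermediate_value_Icc' has₀ (hφ.mono (Icc_subset_Icc_right hs₀b)) ⟨hlt.le, ha⟩
    rw [hfirst t ht htR.le] at htR
    linarith
  refine ⟨sInf S, ⟨has₀, hs₀b⟩, hs₀R, fun t ht => ?_⟩
  by_contra! hlt
  rw [hfirst t ht hlt.le] at hlt
  linarith

theorem ContinuousLinearMap.abs_trace_le {F : Type*} [NormedAddCommGroup F]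
    [InnerProductSpace ℝ F] [FiniteDimensional ℝ F] (T : F →L[ℝ] F) :
    |LinearMap.trace ℝ F T| ≤ Module.finrank ℝ F * ‖T‖ := by
  set b := stdOrthonormalBasis ℝ F
  rw [LinearMap.trace_eq_sum_inner _ b]
  calc |∑ i, ⟪b i, T (b i)⟫_ℝ| ≤ ∑ i, |⟪b i, T (b i)⟫_ℝ| := Finset.abs_sum_le_sum_abs _ _
    _ ≤ ∑ _i, ‖T‖ := Finset.sum_le_sum fun i _ => (abs_real_inner_le_norm _ _).trans
        (by simpa [b.orthonormal.1 i] using T.le_opNorm (b i))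
    _ = Module.finrank ℝ F * ‖T‖ := by simp

section Gibbs

variable {α : Type*} [MeasurableSpace α] {μ : Measure α} {U : α → ℝ} {m : ℝ}

theorem integrable_exp_neg_div_of_setLIntegral_le (hU : Measurable U) (hm : ∀ x, m ≤ U x)
    {ε B : ℝ} (h : ∫⁻ x in {x | m ≤ U x}, ENNReal.ofReal (exp (-U x / ε)) ∂μ ≤ ENNReal.ofReal B) :
    Integrable (fun x => exp (-U x / ε)) μ := by
  rw [show {x | m ≤ U x} = univ from eq_univ_of_forall hm, Measure.restrict_univ] at h
  exact ⟨(by fun_prop : Measurable fun x => exp (-U x / ε)).aestronglyMeasurable,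
    (hasFiniteIntegral_iff_ofReal (ae_of_all _ fun x => (exp_pos _).le)).2
      (h.trans_lt ENNReal.ofReal_lt_top)⟩

theorem integrable_sq_mul_exp_neg_div {f : α → ℝ} {A c ε : ℝ}
    (hgibbs : ∀ ε', 0 < ε' → Integrable (fun x => exp (-U x / ε')) μ)
    (hf : AEStronglyMeasurable f μ) (hfU : ∀ x, |f x| ≤ A * exp (c * (U x - m)))
    (hε : 0 < ε) (hεc : 2 * c * ε < 1) :
    Integrable (fun x => f x ^ 2 * exp (-U x / ε)) μ := by
  -- `e^{2c U - U/ε} = e^{-U/ε'}` with a smaller but still positive temperature `ε'`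
  set ε' := ε / (1 - 2 * c * ε)
  have hε' : 0 < ε' := div_pos hε (by linarith)
  refine ((hgibbs ε' hε').const_mul (A ^ 2 * exp (-(2 * c * m)))).mono'
    ((hf.pow 2).mul (hgibbs ε hε).1) (ae_of_all _ fun x => ?_)
  rw [Real.norm_of_nonneg (by positivity)]
  calc f x ^ 2 * exp (-U x / ε) ≤ A ^ 2 * exp (2 * (c * (U x - m))) * exp (-U x / ε) := by
        gcongr; exact sq_le_sq_mul_exp (hfU x)
    _ = A ^ 2 * exp (-(2 * c * m)) * exp (-U x / ε') := by
        rw [mul_assoc, mul_assoc, ← exp_add, ← exp_add]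
        congr 2
        simp only [ε']
        field_simp
        ring

end Gibbs

section Gradient

variable {E : Type*} [NormedAddCommGroup E] [InnerProductSpace ℝ E]

theorem Convex.abs_inv_norm_sub_le {F : Type*} [NormedAddCommGroup F] [InnerProductSpace ℝ F]
    {G : E → F} {s : Set E} {C : ℝ} (hs : Convex ℝ s) (hG : ∀ z ∈ s, DifferentiableAt ℝ G z)
    (hG0 : ∀ z ∈ s, G z ≠ 0) (hC : ∀ z ∈ s, ‖fderiv ℝ G z‖ ≤ C * ‖G z‖ ^ 2)
    {x y : E} (hx : x ∈ s) (hy : y ∈ s) : |‖G y‖⁻¹ - ‖G x‖⁻¹| ≤ C * ‖y - x‖ := by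
  have hderiv : ∀ z ∈ s, HasFDerivWithinAt (fun z => ‖G z‖⁻¹)
      ((toSpanSingleton ℝ (-(‖G z‖ ^ 2)⁻¹)).comp
        ((fderiv ℝ (‖·‖) (G z)).comp (fderiv ℝ G z))) s z := fun z hz =>
    ((hasFDerivAt_inv (norm_ne_zero_iff.2 (hG0 z hz))).comp z
      (((contDiffAt_norm ℝ (hG0 z hz)).differentiableAt one_ne_zero).hasFDerivAt.comp z
        (hG z hz).hasFDerivAt)).hasFDerivWithinAt
  refine hs.norm_image_sub_le_of_norm_hasFDerivWithin_le hderiv (fun z hz => ?_) hx hy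
  have hGz : 0 < ‖G z‖ := norm_pos_iff.2 (hG0 z hz)
  have hnorm : ‖fderiv ℝ (‖·‖) (G z)‖ ≤ 1 := by
    simpa using norm_fderiv_le_of_lipschitz ℝ lipschitzWith_one_norm (x₀ := G z)
  calc _ ≤ (‖G z‖ ^ 2)⁻¹ * (1 * ‖fderiv ℝ G z‖) := by
        refine (opNorm_comp_le _ _).trans ?_
        rw [norm_toSpanSingleton, norm_neg, norm_inv, norm_pow, norm_norm]
        gcongr
        exact (opNorm_comp_le _ _).trans (by gcongr)
    _ ≤ C := by
        rw [one_mul, inv_mul_le_iff₀ (by positivity), mul_comm]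
        exact hC z hz

variable [CompleteSpace E]

theorem ContDiff.gradient {U : E → ℝ} {n : WithTop ℕ∞} (hU : ContDiff ℝ (n + 1) U) :
    ContDiff ℝ n (gradient U) :=
  (toDual ℝ E).symm.contDiff.comp (hU.fderiv_right le_rfl)

theorem norm_fderiv_sub_fderiv (U : E → ℝ) (x y : E) :
    ‖fderiv ℝ U y - fderiv ℝ U x‖ = ‖gradient U y - gradient U x‖ := by
  rw [← toDual_gradient, ← toDual_gradient, ← map_sub, LinearIsometryEquiv.norm_map]

variable {U : E → ℝ} {C : ℝ} {Ω : Set E}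

theorem norm_gradient_sub_le_of_segment_subset (hU : ContDiff ℝ 2 U)
    (hΩ : ∀ z ∈ Ω, gradient U z ≠ 0 ∧ ‖fderiv ℝ (gradient U) z‖ ≤ C * ‖gradient U z‖ ^ 2)
    {x y : E} (hseg : segment ℝ x y ⊆ Ω) (hxy : 8 * C * ‖gradient U x‖ * ‖y - x‖ ≤ 1)
    {z : E} (hz : z ∈ segment ℝ x y) :
    ‖gradient U z - gradient U x‖ ≤ ‖gradient U x‖ / 2 := by
  have hdiff : ∀ w ∈ segment ℝ x y, DifferentiableAt ℝ (gradient U) w :=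
    fun w _ => (hU.gradient (n := 1)).differentiable one_ne_zero w
  have hx : x ∈ segment ℝ x y := left_mem_segment ℝ x y
  have hg0 : 0 < ‖gradient U x‖ := norm_pos_iff.2 (hΩ x (hseg hx)).1
  have hC : 0 ≤ C := nonneg_of_mul_nonneg_left ((norm_nonneg _).trans (hΩ x (hseg hx)).2)
    (by positivity)
  -- `‖∇U‖⁻¹` is `C`-Lipschitz on the segment, so `‖∇U‖` grows by at most a factor `8/7` on it
  have hgrowth : ∀ w ∈ segment ℝ x y, ‖gradient U w‖ ≤ 8 / 7 * ‖gradient U x‖ := by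
    intro w hw
    have hw0 : 0 < ‖gradient U w‖ := norm_pos_iff.2 (hΩ w (hseg hw)).1
    have hlip := (convex_segment x y).abs_inv_norm_sub_le hdiff (fun w hw => (hΩ w (hseg hw)).1)
      (fun w hw => (hΩ w (hseg hw)).2) hx hw
    have hwx : C * ‖w - x‖ ≤ C * ‖y - x‖ := by gcongr; exact norm_sub_le_of_mem_segment hw
    have hinv := (abs_le.1 (hlip.trans hwx)).1
    rw [neg_le_sub_iff_le_add] at hinv
    field_simp at hinv
    nlinarith [mul_le_mul_of_nonneg_left hxy hw0.le]
  have hhess : ∀ w ∈ segment ℝ x y,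
      ‖fderiv ℝ (gradient U) w‖ ≤ C * (8 / 7 * ‖gradient U x‖) ^ 2 := fun w hw =>
    (hΩ w (hseg hw)).2.trans (by gcongr; exact hgrowth w hw)
  have hosc := (convex_segment x y).norm_image_sub_le_of_norm_fderiv_le hdiff hhess hx hz
  calc _ ≤ C * (8 / 7 * ‖gradient U x‖) ^ 2 * ‖z - x‖ := hosc
    _ ≤ C * (8 / 7 * ‖gradient U x‖) ^ 2 * ‖y - x‖ := by
        gcongr; exact norm_sub_le_of_mem_segment hz
    _ = 64 / 49 * ‖gradient U x‖ * (C * ‖gradient U x‖ * ‖y - x‖) := by ring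
    _ ≤ 64 / 49 * ‖gradient U x‖ * (1 / 8) :=
        mul_le_mul_of_nonneg_left (by linarith) (by positivity)
    _ ≤ ‖gradient U x‖ / 2 := by linarith

theorem gradient_descent_step (hU : ContDiff ℝ 2 U)
    (hΩ : ∀ z ∈ Ω, gradient U z ≠ 0 ∧ ‖fderiv ℝ (gradient U) z‖ ≤ C * ‖gradient U z‖ ^ 2)
    {x : E} {τ : ℝ} (hτ : 0 ≤ τ) (hτC : 8 * C * τ * ‖gradient U x‖ ^ 2 ≤ 1)
    (hseg : segment ℝ x (x - τ • gradient U x) ⊆ Ω) :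
    U (x - τ • gradient U x) ≤ U x - τ * ‖gradient U x‖ ^ 2 / 2 ∧
      ‖gradient U x‖ ≤ ‖gradient U (x - τ • gradient U x)‖ *
        exp (2 * C * (U x - U (x - τ • gradient U x))) := by
  set y := x - τ • gradient U x with hy
  set g := ‖gradient U x‖
  have hx : x ∈ segment ℝ x y := left_mem_segment ℝ x y
  have hyseg : y ∈ segment ℝ x y := right_mem_segment ℝ x y
  have hg0 : 0 < g := norm_pos_iff.2 (hΩ x (hseg hx)).1
  have hy0 : 0 < ‖gradient U y‖ := norm_pos_iff.2 (hΩ y (hseg hyseg)).1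
  have hC : 0 ≤ C := nonneg_of_mul_nonneg_left ((norm_nonneg _).trans (hΩ x (hseg hx)).2)
    (by positivity)
  have hyx : ‖y - x‖ = τ * g := by
    rw [hy, sub_sub_cancel_left, norm_neg, norm_smul, Real.norm_of_nonneg hτ]
  have hdecrease : U y ≤ U x - τ * g ^ 2 / 2 := by
    have hosc : ∀ w ∈ segment ℝ x y, ‖fderiv ℝ U w - fderiv ℝ U x‖ ≤ g / 2 := fun w hw => by
      rw [norm_fderiv_sub_fderiv]
      exact norm_gradient_sub_le_of_segment_subset hU hΩ hseg (by rw [hyx]; linarith) hw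
    have hmvt := (convex_segment x y).norm_image_sub_le_of_norm_fderiv_le'
      (fun w _ => (hU.differentiable (by norm_num)) w) hosc hx hyseg
    have hlin : fderiv ℝ U x (y - x) = -(τ * g ^ 2) := by
      rw [← inner_gradient_left, hy, sub_sub_cancel_left, inner_neg_right, real_inner_smul_right,
        real_inner_self_eq_norm_sq]
    rw [hlin, hyx, Real.norm_eq_abs] at hmvt
    nlinarith [(abs_le.1 hmvt).2]
  refine ⟨hdecrease, ?_⟩
  have hlip := (convex_segment x y).abs_inv_norm_sub_le
    (fun w _ => (hU.gradient (n := 1)).differentiable one_ne_zero w)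
    (fun w hw => (hΩ w (hseg hw)).1) (fun w hw => (hΩ w (hseg hw)).2) hx hyseg
  have hinv : ‖gradient U y‖⁻¹ ≤ g⁻¹ * exp (2 * C * (U x - U y)) :=
    calc ‖gradient U y‖⁻¹ ≤ g⁻¹ + C * (τ * g) := by
          rw [hyx] at hlip; linarith [(abs_le.1 hlip).2]
      _ = g⁻¹ * (C * (τ * g ^ 2) + 1) := by field_simp; ring
      _ ≤ g⁻¹ * (2 * C * (U x - U y) + 1) :=
          mul_le_mul_of_nonneg_left (by nlinarith) (by positivity)
      _ ≤ g⁻¹ * exp (2 * C * (U x - U y)) := by gcongr; exact add_one_le_exp _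
  rwa [inv_le_comm₀ hy0 (by positivity), mul_inv, inv_inv, ← div_eq_mul_inv,
    div_le_iff₀ (exp_pos _)] at hinv

theorem exists_descent_step (hU : ContDiff ℝ 2 U) (hC : 0 < C) {R : ℝ}
    (hΩ : ∀ z ∈ {z : E | R ≤ ‖z‖},
      gradient U z ≠ 0 ∧ ‖fderiv ℝ (gradient U) z‖ ≤ C * ‖gradient U z‖ ^ 2)
    {x : E} (hxR : R ≤ ‖x‖) :
    ∃ y, (‖y‖ ≤ R ∨ U y ≤ U x - 1 / (16 * C)) ∧
      ‖gradient U x‖ ≤ ‖gradient U y‖ * exp (2 * C * (U x - U y)) := by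
  set v := gradient U x
  have hv : 0 < ‖v‖ := norm_pos_iff.2 (hΩ x hxR).1
  set τ := (8 * C * ‖v‖ ^ 2)⁻¹
  -- take the full step of length `τ`, or stop where the path first meets the ball
  obtain ⟨s, hs, hy, hseg⟩ : ∃ s ∈ Icc 0 τ, (‖x - s • v‖ ≤ R ∨ s = τ) ∧
      ∀ t ∈ Icc 0 s, R ≤ ‖x - t • v‖ := by
    by_cases hhit : ∃ s ∈ Icc 0 τ, ‖x - s • v‖ ≤ R
    · obtain ⟨s, hs, hsR, hseg⟩ :=
        ContinuousOn.exists_first_le (by fun_prop) (by simpa using hxR) hhit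
      exact ⟨s, hs, Or.inl hsR, hseg⟩
    · push Not at hhit
      exact ⟨τ, ⟨by positivity, le_rfl⟩, Or.inr rfl, fun t ht => (hhit t ht).le⟩
  have hsub : segment ℝ x (x - s • v) ⊆ {z | R ≤ ‖z‖} := by
    rw [segment_eq_image']
    rintro _ ⟨θ, hθ, rfl⟩
    simpa [smul_smul, sub_eq_add_neg] using
      hseg (θ * s) ⟨mul_nonneg hθ.1 hs.1, mul_le_of_le_one_left hs.1 hθ.2⟩
  have hsτ : 8 * C * s * ‖v‖ ^ 2 ≤ 1 :=
    calc 8 * C * s * ‖v‖ ^ 2 ≤ 8 * C * τ * ‖v‖ ^ 2 := by gcongr; exact hs.2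
      _ = 1 := by simp only [τ]; field_simp
  obtain ⟨hdec, hgrad⟩ := gradient_descent_step hU hΩ hs.1 hsτ hsub
  refine ⟨x - s • v, hy.imp_right fun hfull => ?_, hgrad⟩
  have hstep : τ * ‖v‖ ^ 2 / 2 = 1 / (16 * C) := by simp only [τ]; field_simp; ring
  subst hfull
  rwa [hstep] at hdec

theorem norm_gradient_le_mul_exp (hU : ContDiff ℝ 2 U) (hC : 0 < C) {R M m : ℝ}
    (hm : ∀ z, m ≤ U z) (hM : ∀ z, ‖z‖ ≤ R → ‖gradient U z‖ ≤ M)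
    (hΩ : ∀ z ∈ {z : E | R ≤ ‖z‖},
      gradient U z ≠ 0 ∧ ‖fderiv ℝ (gradient U) z‖ ≤ C * ‖gradient U z‖ ^ 2)
    (x : E) : ‖gradient U x‖ ≤ M * exp (2 * C * (U x - m)) := by
  have hball : ∀ z, ‖z‖ ≤ R → ‖gradient U z‖ ≤ M * exp (2 * C * (U z - m)) := fun z hz =>
    (hM z hz).trans (le_mul_of_one_le_right ((norm_nonneg _).trans (hM z hz))
      (one_le_exp (by nlinarith [hm z])))
  suffices key : ∀ n : ℕ, ∀ x, U x - m ≤ n / (16 * C) →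
      ‖gradient U x‖ ≤ M * exp (2 * C * (U x - m)) by
    obtain ⟨n, hn⟩ := exists_nat_ge (16 * C * (U x - m))
    exact key n x (by rw [le_div_iff₀ (by positivity)]; linarith)
  intro n
  induction n with
  | zero =>
    intro x hx
    by_cases hxR : ‖x‖ ≤ R
    · exact hball x hxR
    have hmin : IsMinOn U univ x := fun z _ => by
      simp only [CharP.cast_eq_zero, zero_div] at hx
      show U x ≤ U z
      linarith [hm z]
    have hcrit : gradient U x = 0 := by
      simp [gradient, (hmin.isLocalMin univ_mem).fderiv_eq_zero]
    exact absurd hcrit (hΩ x (not_le.1 hxR).le).1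
  | succ n ih =>
    intro x hx
    by_cases hxR : ‖x‖ ≤ R
    · exact hball x hxR
    obtain ⟨y, hy, hgrad⟩ := exists_descent_step hU hC hΩ (not_le.1 hxR).le
    have hy' : ‖gradient U y‖ ≤ M * exp (2 * C * (U y - m)) := by
      refine hy.elim (hball y) fun hUy => ih y ?_
      push_cast at hx
      rw [add_div] at hx
      linarith
    calc ‖gradient U x‖ ≤ ‖gradient U y‖ * exp (2 * C * (U x - U y)) := hgrad
      _ ≤ M * exp (2 * C * (U y - m)) * exp (2 * C * (U x - U y)) := by gcongr
      _ = M * exp (2 * C * (U x - m)) := by rw [mul_assoc, ← exp_add]; ring_nf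

theorem exists_norm_gradient_sq_and_hessian_le_exp [ProperSpace E] (hU : ContDiff ℝ 2 U)
    (hC : 0 < C) {K : Set E} (hK : IsCompact K)
    (hhess : ∀ x ∉ K, ‖fderiv ℝ (gradient U) x‖ ≤ C * ‖gradient U x‖ ^ 2)
    (hinfty : Tendsto U (cocompact E) atTop)
    (hcrit : Bornology.IsBounded {x | gradient U x = 0}) :
    ∃ m A : ℝ, (∀ x, m ≤ U x) ∧ ∀ x, ‖gradient U x‖ ^ 2 ≤ A * exp (4 * C * (U x - m)) ∧
      ‖fderiv ℝ (gradient U) x‖ ≤ A * exp (4 * C * (U x - m)) := by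
  obtain ⟨R, hR, hKR⟩ := (hK.isBounded.union hcrit).subset_ball_lt 0 0
  have hΩ : ∀ z ∈ {z : E | R ≤ ‖z‖},
      gradient U z ≠ 0 ∧ ‖fderiv ℝ (gradient U) z‖ ≤ C * ‖gradient U z‖ ^ 2 := fun z hz => by
    have hzK : z ∉ K ∪ {x | gradient U x = 0} := fun h =>
      (mem_ball_zero_iff.1 (hKR h)).not_ge hz
    simp only [mem_union, mem_ofPred_eq, not_or] at hzK
    exact ⟨hzK.2, hhess z hzK.1⟩
  obtain ⟨x₀, hx₀⟩ := hU.continuous.exists_forall_le hinfty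
  have hgrad : ContDiff ℝ 1 (gradient U) := hU.gradient
  obtain ⟨M, hM⟩ := (isCompact_closedBall (0 : E) R).exists_bound_of_continuousOn
    hgrad.continuous.continuousOn
  obtain ⟨M₂, hM₂⟩ := (isCompact_closedBall (0 : E) R).exists_bound_of_continuousOn
    (hgrad.continuous_fderiv one_ne_zero).continuousOn
  have hM₂0 : 0 ≤ M₂ := (norm_nonneg _).trans (hM₂ 0 (Metric.mem_closedBall_self hR.le))
  have hG : ∀ x, ‖gradient U x‖ ^ 2 ≤ M ^ 2 * exp (4 * C * (U x - U x₀)) := fun x => by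
    have := sq_le_sq_mul_exp ((abs_norm _).trans_le (norm_gradient_le_mul_exp hU hC hx₀
      (fun z hz => by simpa using hM z (mem_closedBall_zero_iff.2 hz)) hΩ x))
    rwa [← mul_assoc, ← mul_assoc, show (2 : ℝ) * 2 = 4 by norm_num] at this
  refine ⟨U x₀, (1 + C) * M ^ 2 + M₂, hx₀, fun x => ⟨?_, ?_⟩⟩
  · exact (hG x).trans (by gcongr; nlinarith [sq_nonneg M])
  · have he : 1 ≤ exp (4 * C * (U x - U x₀)) := one_le_exp (by nlinarith [hx₀ x])
    by_cases hxR : ‖x‖ ≤ R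
    · calc ‖fderiv ℝ (gradient U) x‖ ≤ M₂ := by simpa using hM₂ x (mem_closedBall_zero_iff.2 hxR)
        _ ≤ ((1 + C) * M ^ 2 + M₂) * 1 := by nlinarith [sq_nonneg M]
        _ ≤ _ := by gcongr
    · calc ‖fderiv ℝ (gradient U) x‖ ≤ C * ‖gradient U x‖ ^ 2 := (hΩ x (not_le.1 hxR).le).2
        _ ≤ C * (M ^ 2 * exp (4 * C * (U x - U x₀))) := by gcongr; exact hG x
        _ ≤ _ := by rw [← mul_assoc]; gcongr; nlinarith [sq_nonneg M]

end Gradient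

/-- Under the tail estimate for the Gibbs weight, the Hessian bound
`‖∇²U‖ ≤ C|∇U|²` off a compact set, coercivity of `U`, and boundedness of the
critical set, the functions `|∇U|²` and `ΔU` belong to `L²(dπ_ε)` for small `ε`,
i.e. `|∇U|⁴ e^{-U/ε}` and `(ΔU)² e^{-U/ε}` are Lebesgue integrable. The Hessian is
`fderiv ℝ (gradient U)` and the Laplacian is its trace. -/
theorem stmt7 {d : ℕ}
    (U : EuclideanSpace ℝ (Fin d) → ℝ) (hU : ContDiff ℝ 2 U)
    (htail : ∀ a : ℝ, ∃ C : ℝ, ∀ ε : ℝ, 0 < ε →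
      (∫⁻ x in {x | a ≤ U x}, ENNReal.ofReal (Real.exp (-U x / ε))) ≤
        ENNReal.ofReal (C * Real.exp (-a / ε)))
    (hhess : ∃ C : ℝ, 0 < C ∧ ∃ K : Set (EuclideanSpace ℝ (Fin d)), IsCompact K ∧
      ∀ x ∉ K, ‖fderiv ℝ (gradient U) x‖ ≤ C * ‖gradient U x‖ ^ 2)
    (hinfty : Tendsto U (Filter.cocompact (EuclideanSpace ℝ (Fin d))) atTop)
    (hcrit : Bornology.IsBounded {x | gradient U x = 0}) :
    ∃ ε₀ : ℝ, 0 < ε₀ ∧ ∀ ε : ℝ, 0 < ε → ε < ε₀ →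
      Integrable (fun x => ‖gradient U x‖ ^ 4 * Real.exp (-U x / ε)) ∧
      Integrable (fun x =>
        (LinearMap.trace ℝ (EuclideanSpace ℝ (Fin d))
            (fderiv ℝ (gradient U) x).toLinearMap) ^ 2 * Real.exp (-U x / ε)) := by
  obtain ⟨C, hC, K, hK, hhessK⟩ := hhess
  obtain ⟨m, A, hm, hbound⟩ :=
    exists_norm_gradient_sq_and_hessian_le_exp hU hC hK hhessK hinfty hcrit
  obtain ⟨B, hB⟩ := htail m
  have hgibbs : ∀ ε, 0 < ε → Integrable (fun x => exp (-U x / ε)) := fun ε hε =>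
    integrable_exp_neg_div_of_setLIntegral_le hU.continuous.measurable hm (hB ε hε)
  have hgrad : ContDiff ℝ 1 (gradient U) := hU.gradient
  refine ⟨(8 * C)⁻¹, by positivity, fun ε hε hεC => ?_⟩
  have hεc : 2 * (4 * C) * ε < 1 := by
    have := mul_lt_mul_of_pos_left hεC (by positivity : 0 < 8 * C)
    rw [mul_inv_cancel₀ (by positivity)] at this
    linarith
  constructor
  · simpa only [← pow_mul] using integrable_sq_mul_exp_neg_div hgibbs
      (f := fun x => ‖gradient U x‖ ^ 2) (hgrad.continuous.norm.pow 2).aestronglyMeasurable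
      (fun x => (abs_of_nonneg (by positivity)).trans_le (hbound x).1) hε hεc
  · have hlap : Continuous fun x => LinearMap.trace ℝ (EuclideanSpace ℝ (Fin d))
        (fderiv ℝ (gradient U) x).toLinearMap := by
      exact (LinearMap.trace ℝ _ ∘ₗ coeLM ℝ).continuous_of_finiteDimensional.comp
        (hgrad.continuous_fderiv one_ne_zero)
    refine integrable_sq_mul_exp_neg_div hgibbs (m := m) (A := d * A) hlap.aestronglyMeasurable
      (fun x => ?_) hε hεc
    calc _ ≤ Module.finrank ℝ (EuclideanSpace ℝ (Fin d)) * ‖fderiv ℝ (gradient U) x‖ :=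
          ContinuousLinearMap.abs_trace_le _
        _ ≤ d * (A * exp (4 * C * (U x - m))) := by
          rw [finrank_euclideanSpace_fin]; gcongr; exact (hbound x).2
        _ = _ := by ring
end

section
/- Let V be a nonempty finite set and r : V × V → [0,∞) with r(x,x) = 0 for all x ∈ V. Then for every x₀ ∈ V, the Donsker–Varadhan functional evaluated at the Dirac measure δ_{x₀} satisfies 𝔍(δ_{x₀}) = Σ_{y ∈ V, y ≠ x₀} r(x₀, y); that is, the supremum over all positive functions u : V → (0,∞) of −(Lu)(x₀)/u(x₀) equals Σ_{y ≠ x₀} r(x₀, y). -/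
open Filter Topology Finset

/-!
Writing `-(Lu)(x₀)/u(x₀) = Σ_{y ≠ x₀} r(x₀,y) (1 - u(y)/u(x₀))` shows that this quantity is
below the total rate `S = Σ_{y ≠ x₀} r(x₀,y)` for positive `u`, and equal to `(1 - t) S` for
`u = 1` at `x₀` and `u = t` elsewhere; letting `t → 0⁺` gives the supremum `S`.
-/

/-- The Donsker–Varadhan level-two rate functional of the Markov chain on the finite
set `V` with jump rates `r`, evaluated at a weight function `ω` on `V`:
`𝔍(ω) = sup_{u > 0} Σ_x ω(x) · (−(Lu)(x)/u(x))`, where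
`(Lu)(x) = Σ_y r(x,y)(u(y) − u(x))`, viewed as an element of `[0,∞]`. -/
noncomputable def dvRate {V : Type*} [Fintype V] (r : V → V → ℝ) (ω : V → ℝ) :
    ENNReal :=
  ⨆ u : {u : V → ℝ // ∀ x, 0 < u x},
    ENNReal.ofReal (∑ x, ω x * (-((∑ y, r x y * (u.1 y - u.1 x)) / u.1 x)))

namespace DonskerVaradhan

variable {V : Type*} [Fintype V] [DecidableEq V]

def generator (r : V → V → ℝ) (u : V → ℝ) (x : V) : ℝ :=
  ∑ y, r x y * (u y - u x)

theorem neg_generator_div_eq_sum_erase (r : V → V → ℝ) {u : V → ℝ} {x : V} (hu : u x ≠ 0) :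
    -(generator r u x / u x) = ∑ y ∈ univ.erase x, r x y * (1 - u y / u x) := by
  rw [generator, ← Finset.add_sum_erase _ _ (mem_univ x), sub_self, mul_zero, zero_add,
    ← neg_div, ← sum_neg_distrib, sum_div]
  refine sum_congr rfl fun y _ => ?_
  field_simp
  ring

theorem neg_generator_div_le {r : V → V → ℝ} {x : V} (hr : ∀ y, 0 ≤ r x y) {u : V → ℝ}
    (hu : ∀ y, 0 < u y) : -(generator r u x / u x) ≤ ∑ y ∈ univ.erase x, r x y := by
  rw [neg_generator_div_eq_sum_erase r (hu x).ne']
  refine sum_le_sum fun y _ => mul_le_of_le_one_right (hr y) ?_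
  linarith [div_pos (hu y) (hu x)]

theorem neg_generator_div_update_const (r : V → V → ℝ) (x : V) (t : ℝ) :
    -(generator r (Function.update (fun _ => t) x 1) x / Function.update (fun _ => t) x 1 x) =
      (1 - t) * ∑ y ∈ univ.erase x, r x y := by
  rw [neg_generator_div_eq_sum_erase r (by simp), mul_sum]
  refine sum_congr rfl fun y hy => ?_
  rw [Function.update_of_ne (ne_of_mem_erase hy), Function.update_self, div_one, mul_comm]

theorem iSup_neg_generator_div {r : V → V → ℝ} {x : V} (hr : ∀ y, 0 ≤ r x y) :
    ⨆ u : {u : V → ℝ // ∀ y, 0 < u y}, ENNReal.ofReal (-(generator r u.1 x / u.1 x)) =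
      ENNReal.ofReal (∑ y ∈ univ.erase x, r x y) := by
  refine le_antisymm (iSup_le fun u => ENNReal.ofReal_le_ofReal (neg_generator_div_le hr u.2)) ?_
  set S := ∑ y ∈ univ.erase x, r x y
  have hlim : Tendsto (fun t : ℝ => ENNReal.ofReal ((1 - t) * S)) (𝓝[>] 0)
      (𝓝 (ENNReal.ofReal S)) := by
    have : Tendsto (fun t : ℝ => (1 - t) * S) (𝓝 0) (𝓝 ((1 - 0) * S)) :=
      ((continuous_const.sub continuous_id).mul continuous_const).tendsto 0
    rw [sub_zero, one_mul] at this
    exact (ENNReal.tendsto_ofReal this).mono_left nhdsWithin_le_nhds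
  refine le_of_tendsto hlim (eventually_nhdsWithin_of_forall fun t (ht : 0 < t) => ?_)
  have hpos : ∀ y, 0 < Function.update (fun _ => t) x 1 y := fun y => by
    rcases eq_or_ne y x with rfl | hy
    · simp
    · simpa [Function.update_of_ne hy] using ht
  rw [← neg_generator_div_update_const r x t]
  exact le_iSup (fun u : {u : V → ℝ // ∀ y, 0 < u y} =>
    ENNReal.ofReal (-(generator r u.1 x / u.1 x))) ⟨_, hpos⟩

theorem dvRate_dirac (r : V → V → ℝ) (x₀ : V) :
    dvRate r (fun x => if x = x₀ then 1 else 0) =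
      ⨆ u : {u : V → ℝ // ∀ y, 0 < u y}, ENNReal.ofReal (-(generator r u.1 x₀ / u.1 x₀)) := by
  unfold dvRate
  simp only [ite_mul, one_mul, zero_mul, sum_ite_eq', mem_univ, if_true]
  rfl

end DonskerVaradhan

open DonskerVaradhan in
theorem stmt9_general {V : Type*} [Fintype V] [DecidableEq V]
    (r : V → V → ℝ) (hr : ∀ x y, 0 ≤ r x y) (x₀ : V) :
    dvRate r (fun x => if x = x₀ then 1 else 0) =
      ENNReal.ofReal (∑ y ∈ Finset.univ.erase x₀, r x₀ y) ∧
    (⨆ u : {u : V → ℝ // ∀ x, 0 < u x},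
        ENNReal.ofReal (-((∑ y, r x₀ y * (u.1 y - u.1 x₀)) / u.1 x₀))) =
      ENNReal.ofReal (∑ y ∈ Finset.univ.erase x₀, r x₀ y) :=
  ⟨(dvRate_dirac r x₀).trans (iSup_neg_generator_div (hr x₀)), iSup_neg_generator_div (hr x₀)⟩

/-- The Donsker–Varadhan functional at the Dirac measure `δ_{x₀}` equals the total
jump rate out of `x₀`: `𝔍(δ_{x₀}) = Σ_{y ≠ x₀} r(x₀,y)`; equivalently, the supremum
over positive `u` of `−(Lu)(x₀)/u(x₀)` equals `Σ_{y ≠ x₀} r(x₀,y)`. -/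
theorem stmt9 {V : Type*} [Fintype V] [DecidableEq V] [Nonempty V]
    (r : V → V → ℝ) (hr : ∀ x y, 0 ≤ r x y) (hdiag : ∀ x, r x x = 0) (x₀ : V) :
    dvRate r (fun x => if x = x₀ then 1 else 0) =
      ENNReal.ofReal (∑ y ∈ Finset.univ.erase x₀, r x₀ y) ∧
    (⨆ u : {u : V → ℝ // ∀ x, 0 < u x},
        ENNReal.ofReal (-((∑ y, r x₀ y * (u.1 y - u.1 x₀)) / u.1 x₀))) =
      ENNReal.ofReal (∑ y ∈ Finset.univ.erase x₀, r x₀ y) :=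
  stmt9_general r hr x₀
end

section
/- Let V be a nonempty finite set and r : V × V → [0,∞) with r(x,x) = 0 for all x ∈ V, and let D₁,…,D_𝔩 be the communicating (equivalence) classes of the relation determined by r. Then for every probability measure ω on V, 𝔍(ω) = Σ over those classes D_a with ω(D_a) > 0 of ω(D_a)·𝔍(ω_{D_a}), where ω_{D_a} is the probability measure ω conditioned on D_a. -/
/-
For a fixed test function `u` the functional is linear in `ω`, and `ω = Σ_a ω(D_a) ω_{D_a}`;
subadditivity of `ENNReal.ofReal` gives `𝔍(ω) ≤ Σ_a ω(D_a) 𝔍(ω_{D_a})`.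

Conversely, test functions `u_a`, one for each class, are glued into the single function
`u x = t ^ m x * u_{a(x)} x`, where the height `m` is constant on classes and strictly increases
along every jump that leaves a class (the communicating classes are partially ordered by
reachability), and `t ∈ (0, 1]` is small. A jump inside a class sees the same ratio
`u y / u x` as `u_a` does, and a jump out of a class sees a smaller one; since
`-(Lu)(x)/u(x) = Σ_y r(x,y) (1 - u y / u x)`, the glued `u` does at least as well as every `u_a`.
-/

open Filter Topology Finset

lemma ENNReal.finsetSum_iSup_eq_iSup_pi {α ι : Type*} [Nonempty ι] (s : Finset α)
    (f : α → ι → ENNReal) :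
    ∑ a ∈ s, ⨆ i, f a i = ⨆ g : α → ι, ∑ a ∈ s, f a (g a) := by
  have h : ∀ a, ⨆ i, f a i = ⨆ g : α → ι, f a (g a) := fun a =>
    ((Function.surjective_eval (β := fun _ : α => ι) a).iSup_comp (f a)).symm
  simp_rw [h]
  refine ENNReal.finsetSum_iSup fun g₁ g₂ =>
    ⟨fun a => if f a (g₁ a) ≤ f a (g₂ a) then g₂ a else g₁ a, fun a => ?_⟩
  dsimp only
  split_ifs with h12
  · exact ⟨h12, le_rfl⟩
  · exact ⟨le_rfl, (not_le.mp h12).le⟩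

lemma Relation.exists_height {α : Type*} [Fintype α] (R : α → α → Prop) :
    ∃ m : α → ℕ, (∀ x y, ReflTransGen R x y → ReflTransGen R y x → m x = m y) ∧
      ∀ x y, R x y → ¬ ReflTransGen R y x → m x < m y := by
  classical
  refine ⟨fun x => #{z | ¬ ReflTransGen R x z}, fun x y hxy hyx => ?_, fun x y hxy hyx => ?_⟩
  · refine congrArg card (filter_congr fun z _ => ?_)
    exact ⟨fun h h' => h (hxy.trans h'), fun h h' => h (hyx.trans h')⟩
  · refine card_lt_card ((ssubset_iff_of_subset fun z => ?_).mpr ⟨x, ?_⟩)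
    · simp only [mem_filter, mem_univ, true_and]
      exact fun h h' => h ((ReflTransGen.single hxy).trans h')
    · simp [hyx, ReflTransGen.refl]

section DonskerVaradhan

variable {V : Type*} [Fintype V] (r : V → V → ℝ)

noncomputable def dvIntegrand (u : V → ℝ) (x : V) : ℝ :=
  -((∑ y, r x y * (u y - u x)) / u x)

lemma dvRate_eq_iSup (ω : V → ℝ) :
    dvRate r ω = ⨆ u : {u : V → ℝ // ∀ x, 0 < u x},
      ENNReal.ofReal (∑ x, ω x * dvIntegrand r u.1 x) := rfl

lemma ofReal_le_dvRate (ω u : V → ℝ) (hu : ∀ x, 0 < u x) :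
    ENNReal.ofReal (∑ x, ω x * dvIntegrand r u x) ≤ dvRate r ω :=
  le_iSup (fun v : {u : V → ℝ // ∀ x, 0 < u x} =>
    ENNReal.ofReal (∑ x, ω x * dvIntegrand r v.1 x)) ⟨u, hu⟩

lemma exists_sum_mul_dvIntegrand_eq_max (ω u : V → ℝ) (hu : ∀ x, 0 < u x) :
    ∃ v : V → ℝ, (∀ x, 0 < v x) ∧
      ∑ x, ω x * dvIntegrand r v x = max (∑ x, ω x * dvIntegrand r u x) 0 := by
  rcases le_total 0 (∑ x, ω x * dvIntegrand r u x) with h | h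
  · exact ⟨u, hu, (max_eq_left h).symm⟩
  · exact ⟨fun _ => 1, fun _ => one_pos, by rw [max_eq_right h]; simp [dvIntegrand]⟩

variable {r}

lemma dvIntegrand_le_of_ratio_le (hr : ∀ x y, 0 ≤ r x y) {u v : V → ℝ} {x : V}
    (hu : 0 < u x) (hv : 0 < v x) (h : ∀ y, 0 < r x y → v y * u x ≤ u y * v x) :
    dvIntegrand r u x ≤ dvIntegrand r v x := by
  rw [dvIntegrand, dvIntegrand, neg_le_neg_iff, sum_div, sum_div]
  refine sum_le_sum fun y _ => ?_
  rcases (hr x y).eq_or_lt with hxy | hxy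
  · simp [← hxy]
  · rw [div_le_div_iff₀ hv hu]
    nlinarith [mul_le_mul_of_nonneg_left (h y hxy) (hr x y)]

/-- The witness is `u x = t ^ m x * U (c x) x` for `t` small. -/
lemma exists_dvIntegrand_le_glue {ι : Type*} [Finite ι] (hr : ∀ x y, 0 ≤ r x y)
    (c : V → ι) (m : V → ℕ) (hm_eq : ∀ x y, c x = c y → m x = m y)
    (hm_lt : ∀ x y, 0 < r x y → c x ≠ c y → m x < m y)
    (U : ι → V → ℝ) (hU : ∀ a x, 0 < U a x) :
    ∃ u : V → ℝ, (∀ x, 0 < u x) ∧ ∀ x, dvIntegrand r (U (c x)) x ≤ dvIntegrand r u x := by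
  have hsmall : ∀ᶠ t in 𝓝 (0 : ℝ), t ≤ 1 ∧ ∀ a b y, t * U b y ≤ U a y := by
    refine (eventually_le_nhds one_pos).and (eventually_all.2 fun a =>
      eventually_all.2 fun b => eventually_all.2 fun y => ?_)
    have hlim : Tendsto (fun t : ℝ => t * U b y) (𝓝 0) (𝓝 0) := by
      simpa using (continuous_mul_const (U b y)).tendsto 0
    exact hlim.eventually (eventually_le_nhds (hU a y))
  obtain ⟨t, ⟨ht1, htU⟩, ht0⟩ :=
    ((hsmall.filter_mono nhdsWithin_le_nhds).and (self_mem_nhdsWithin (s := Set.Ioi 0))).exists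
  have ht0 : 0 < t := ht0
  refine ⟨fun x => t ^ m x * U (c x) x, fun x => by have := hU (c x) x; positivity,
    fun x => dvIntegrand_le_of_ratio_le hr (hU _ x) (by have := hU (c x) x; positivity)
      fun y hxy => ?_⟩
  by_cases hc : c x = c y
  · rw [hm_eq x y hc, hc]
    exact le_of_eq (by ring)
  · have hpow : t ^ m y ≤ t ^ m x * t :=
      (pow_le_pow_of_le_one ht0.le ht1 (hm_lt x y hxy hc)).trans_eq (pow_succ t (m x))
    have := hU (c y) y
    have := hU (c x) x
    calc t ^ m y * U (c y) y * U (c x) x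
        ≤ t ^ m x * t * U (c y) y * U (c x) x := by gcongr
      _ = t ^ m x * (t * U (c y) y) * U (c x) x := by ring
      _ ≤ t ^ m x * U (c x) y * U (c x) x := by gcongr; exact htU _ _ _
      _ = U (c x) y * (t ^ m x * U (c x) x) := by ring

end DonskerVaradhan

section Conditioning

variable {V : Type*} [Fintype V] [DecidableEq V]

/-- Since `x / 0 = 0`, this is `0` when `ω(s) = 0`. -/
noncomputable def condOn (ω : V → ℝ) (s : Finset V) (x : V) : ℝ :=
  if x ∈ s then ω x / ∑ z ∈ s, ω z else 0

lemma mass_mul_sum_condOn_mul {ω : V → ℝ} (hω : ∀ x, 0 ≤ ω x) (s : Finset V) (f : V → ℝ) :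
    (∑ z ∈ s, ω z) * ∑ x, condOn ω s x * f x = ∑ x ∈ s, ω x * f x := by
  simp only [condOn, ite_mul, zero_mul, Fintype.sum_ite_mem, mul_sum]
  by_cases hs : ∑ z ∈ s, ω z = 0
  · have h0 := (sum_eq_zero_iff_of_nonneg fun x _ => hω x).mp hs
    simp only [hs, zero_mul, sum_const_zero]
    exact (sum_eq_zero fun x hx => by simp [h0 x hx]).symm
  · refine sum_congr rfl fun x _ => ?_
    field_simp

lemma sum_mul_eq_sum_mass_mul_condOn {ι : Type*} [Fintype ι] {D : ι → Finset V} {c : V → ι}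
    (hD : ∀ x a, x ∈ D a ↔ c x = a) {ω : V → ℝ} (hω : ∀ x, 0 ≤ ω x) (g : ι → V → ℝ) :
    ∑ x, ω x * g (c x) x =
      ∑ a with 0 < ∑ x ∈ D a, ω x, (∑ x ∈ D a, ω x) * ∑ x, condOn ω (D a) x * g a x := by
  classical
  have hfiber : ∀ a, D a = univ.filter (c · = a) := fun a => by
    ext x; simp [hD]
  rw [sum_filter_of_ne fun a _ h => (sum_nonneg fun x _ => hω x).lt_of_ne' (left_ne_zero_of_mul h)]
  simp_rw [mass_mul_sum_condOn_mul hω, hfiber]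
  rw [← sum_fiberwise univ c]
  refine sum_congr rfl fun a _ => sum_congr rfl fun x hx => ?_
  rw [(mem_filter.mp hx).2]

end Conditioning

section Decomposition

variable {V ι : Type*} [Fintype V] [DecidableEq V] [Fintype ι] {r : V → V → ℝ}
  {D : ι → Finset V} {c : V → ι} {ω : V → ℝ}

lemma dvRate_le_sum_mass_mul (hD : ∀ x a, x ∈ D a ↔ c x = a) (hω : ∀ x, 0 ≤ ω x) :
    dvRate r ω ≤ ∑ a with 0 < ∑ x ∈ D a, ω x,
      ENNReal.ofReal (∑ x ∈ D a, ω x) * dvRate r (condOn ω (D a)) := by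
  rw [dvRate_eq_iSup]
  refine iSup_le fun u => ?_
  rw [sum_mul_eq_sum_mass_mul_condOn hD hω fun _ => dvIntegrand r u.1]
  refine (le_sum_of_subadditive _ ENNReal.ofReal_zero.le (fun _ _ => ENNReal.ofReal_add_le)
    _ _).trans (sum_le_sum fun a _ => ?_)
  rw [ENNReal.ofReal_mul (sum_nonneg fun x _ => hω x)]
  gcongr
  exact ofReal_le_dvRate r _ u.1 u.2

lemma sum_mass_mul_le_dvRate (hr : ∀ x y, 0 ≤ r x y) (hD : ∀ x a, x ∈ D a ↔ c x = a)
    (hcomm : ∀ x y, c x = c y ↔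
      Relation.ReflTransGen (fun p q => 0 < r p q) x y ∧
        Relation.ReflTransGen (fun p q => 0 < r p q) y x)
    (hω : ∀ x, 0 ≤ ω x) :
    ∑ a with 0 < ∑ x ∈ D a, ω x,
      ENNReal.ofReal (∑ x ∈ D a, ω x) * dvRate r (condOn ω (D a)) ≤ dvRate r ω := by
  have : Nonempty {u : V → ℝ // ∀ x, 0 < u x} := ⟨⟨1, fun _ => one_pos⟩⟩
  simp_rw [dvRate_eq_iSup, ENNReal.mul_iSup]
  rw [ENNReal.finsetSum_iSup_eq_iSup_pi]
  refine iSup_le fun G => ?_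
  choose W hW hW_eq using fun a => exists_sum_mul_dvIntegrand_eq_max r (condOn ω (D a)) _ (G a).2
  obtain ⟨m, hm_eq, hm_lt⟩ := Relation.exists_height fun p q => 0 < r p q
  obtain ⟨u, hu, hWu⟩ := exists_dvIntegrand_le_glue hr c m
    (fun x y hxy => hm_eq x y ((hcomm x y).mp hxy).1 ((hcomm x y).mp hxy).2)
    (fun x y hxy hc => hm_lt x y hxy fun hyx => hc ((hcomm x y).mpr ⟨.single hxy, hyx⟩)) W hW
  have hmass : ∀ a, 0 ≤ ∑ x ∈ D a, ω x := fun a => sum_nonneg fun x _ => hω x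
  calc ∑ a with 0 < ∑ x ∈ D a, ω x, ENNReal.ofReal (∑ x ∈ D a, ω x) *
        ENNReal.ofReal (∑ x, condOn ω (D a) x * dvIntegrand r (G a).1 x)
      = ENNReal.ofReal (∑ a with 0 < ∑ x ∈ D a, ω x,
          (∑ x ∈ D a, ω x) * ∑ x, condOn ω (D a) x * dvIntegrand r (W a) x) := by
        rw [ENNReal.ofReal_sum_of_nonneg fun a _ => mul_nonneg (hmass a) (by simp [hW_eq])]
        refine sum_congr rfl fun a _ => ?_
        rw [ENNReal.ofReal_mul (hmass a), hW_eq, ENNReal.ofReal_max, ENNReal.ofReal_zero,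
          max_eq_left zero_le]
    _ = ENNReal.ofReal (∑ x, ω x * dvIntegrand r (W (c x)) x) := by
        rw [sum_mul_eq_sum_mass_mul_condOn hD hω fun a => dvIntegrand r (W a)]
    _ ≤ ENNReal.ofReal (∑ x, ω x * dvIntegrand r u x) := by
        gcongr with x
        · exact hω x
        · exact hWu x
    _ ≤ dvRate r ω := ofReal_le_dvRate r ω u hu

end Decomposition

theorem stmt11_general {V : Type*} [Fintype V] [DecidableEq V]
    (r : V → V → ℝ) (hr : ∀ x y, 0 ≤ r x y)
    (l : ℕ) (D : Fin l → Finset V)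
    (hcover : ∀ x : V, ∃! a : Fin l, x ∈ D a)
    (hclass : ∀ a : Fin l, ∀ x ∈ D a, ∀ y : V,
      (y ∈ D a ↔ Relation.ReflTransGen (fun p q => 0 < r p q) x y ∧
                  Relation.ReflTransGen (fun p q => 0 < r p q) y x))
    (ω : V → ℝ) (hω0 : ∀ x, 0 ≤ ω x) :
    dvRate r ω =
      ∑ a ∈ Finset.univ.filter (fun a : Fin l => 0 < ∑ x ∈ D a, ω x),
        ENNReal.ofReal (∑ x ∈ D a, ω x) *
          dvRate r (fun x => if x ∈ D a then ω x / ∑ z ∈ D a, ω z else 0) := by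
  choose c hc using hcover
  have hD : ∀ x a, x ∈ D a ↔ c x = a :=
    fun x a => ⟨fun h => ((hc x).2 a h).symm, fun h => h ▸ (hc x).1⟩
  have hcomm : ∀ x y, c x = c y ↔
      Relation.ReflTransGen (fun p q => 0 < r p q) x y ∧
        Relation.ReflTransGen (fun p q => 0 < r p q) y x := fun x y => by
    rw [eq_comm, ← hD y (c x)]
    exact hclass (c x) x (hc x).1 y
  exact le_antisymm (dvRate_le_sum_mass_mul hD hω0) (sum_mass_mul_le_dvRate hr hD hcomm hω0)

/-- Decomposition of the Donsker–Varadhan functional over the communicating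
(equivalence) classes `D 0, …, D (l-1)` of the chain: for every probability
measure `ω`, `𝔍(ω) = Σ_{a : ω(D_a) > 0} ω(D_a) · 𝔍(ω_{D_a})`, where `ω_{D_a}` is
`ω` conditioned on `D_a`. Here `y ∈ D a` iff `y` communicates with any `x ∈ D a`,
communication being mutual reachability through positive jump rates. -/
theorem stmt11 {V : Type*} [Fintype V] [DecidableEq V] [Nonempty V]
    (r : V → V → ℝ) (hr : ∀ x y, 0 ≤ r x y) (hdiag : ∀ x, r x x = 0)
    (l : ℕ) (D : Fin l → Finset V)
    (hcover : ∀ x : V, ∃! a : Fin l, x ∈ D a)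
    (hclass : ∀ a : Fin l, ∀ x ∈ D a, ∀ y : V,
      (y ∈ D a ↔ Relation.ReflTransGen (fun p q => 0 < r p q) x y ∧
                  Relation.ReflTransGen (fun p q => 0 < r p q) y x))
    (ω : V → ℝ) (hω0 : ∀ x, 0 ≤ ω x) (hω1 : ∑ x, ω x = 1) :
    dvRate r ω =
      ∑ a ∈ Finset.univ.filter (fun a : Fin l => 0 < ∑ x ∈ D a, ω x),
        ENNReal.ofReal (∑ x ∈ D a, ω x) *
          dvRate r (fun x => if x ∈ D a then ω x / ∑ z ∈ D a, ω z else 0) :=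
  stmt11_general r hr l D hcover hclass ω hω0
end

section
/- Let U : ℝ^d → ℝ be continuously differentiable, let c ∈ ℝ^d, and let R > 0, r₁ > 0, b > 0 satisfy B_{r₁}(c) ⊆ B_R and |∇U(y)|² ≥ b·|y − c|² for all y ∈ B_{r₁}(c). Let (μ_ε)_{ε>0} be a family of Borel probability measures on ℝ^d with liminf_{ε→0⁺} (1/ε) ∫_{B_R} |∇U|² dμ_ε < ∞. Then limsup_{r→0⁺} liminf_{ε→0⁺} (1/ε) ∫_{B_r(c)} |y − c|³ dμ_ε(y) = 0. -/
open Filter Topology MeasureTheory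

/-!
On `B_r(c)` with `r ≤ r₁` one has `|y - c|³ ≤ r |y - c|² ≤ (r / b) |∇U(y)|²`, so the rescaled third
moment on `B_r(c)` is at most `(r / b)` times the rescaled gradient energy on `B_R`. Taking
`liminf` in `ε` bounds it by `(r / b) L` with `L < ∞`, which tends to `0` as `r → 0⁺`.
-/

theorem ENNReal.liminf_const_mul_le {α : Type*} {l : Filter α} [l.NeBot] (u : α → ENNReal)
    {a : ENNReal} (ha : a ≠ ⊤) :
    liminf (fun x => a * u x) l ≤ a * liminf u l := by
  rcases eq_or_ne a 0 with rfl | ha₀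
  · simp
  simpa [limsup_const, Pi.mul_def] using
    ENNReal.liminf_mul_le (u := fun _ => a) (v := u) (f := l)
      (Or.inl (by simpa)) (Or.inl (by simpa))

theorem setLIntegral_norm_sub_pow_three_le {E : Type*} [NormedAddCommGroup E] [MeasurableSpace E]
    [OpensMeasurableSpace E] (ν : Measure E) {g : E → ℝ} {c : E} {r b : ℝ} (hb : 0 < b)
    (hlow : ∀ y ∈ Metric.closedBall c r, b * ‖y - c‖ ^ 2 ≤ g y) :
    ∫⁻ y in Metric.closedBall c r, ENNReal.ofReal (‖y - c‖ ^ 3) ∂ν ≤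
      ENNReal.ofReal (r / b) * ∫⁻ y in Metric.closedBall c r, ENNReal.ofReal (g y) ∂ν := by
  rw [← lintegral_const_mul' _ _ ENNReal.ofReal_ne_top]
  refine setLIntegral_mono' measurableSet_closedBall fun y hy => ?_
  have hyr : ‖y - c‖ ≤ r := by simpa [dist_eq_norm] using hy
  have hr : 0 ≤ r := (norm_nonneg _).trans hyr
  rw [← ENNReal.ofReal_mul (by positivity)]
  refine ENNReal.ofReal_le_ofReal ?_
  calc ‖y - c‖ ^ 3 = ‖y - c‖ * ‖y - c‖ ^ 2 := by ring
    _ ≤ r * ‖y - c‖ ^ 2 := by gcongr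
    _ = r / b * (b * ‖y - c‖ ^ 2) := by field_simp
    _ ≤ r / b * g y := by gcongr; exact hlow y hy

theorem stmt14_general {d : ℕ}
    (U : EuclideanSpace ℝ (Fin d) → ℝ)
    (c : EuclideanSpace ℝ (Fin d)) (R r₁ b : ℝ)
    (hr₁ : 0 < r₁) (hb : 0 < b)
    (hsub : Metric.closedBall c r₁ ⊆
      Metric.closedBall (0 : EuclideanSpace ℝ (Fin d)) R)
    (hlow : ∀ y ∈ Metric.closedBall c r₁, b * ‖y - c‖ ^ 2 ≤ ‖gradient U y‖ ^ 2)
    (μ : ℝ → Measure (EuclideanSpace ℝ (Fin d)))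
    (hfin : Filter.liminf (fun ε =>
        (ENNReal.ofReal ε)⁻¹ *
          ∫⁻ x in Metric.closedBall (0 : EuclideanSpace ℝ (Fin d)) R,
            ENNReal.ofReal (‖gradient U x‖ ^ 2) ∂(μ ε))
      (𝓝[>] (0:ℝ)) < ⊤) :
    Filter.limsup (fun r =>
        Filter.liminf (fun ε =>
            (ENNReal.ofReal ε)⁻¹ *
              ∫⁻ y in Metric.closedBall c r,
                ENNReal.ofReal (‖y - c‖ ^ 3) ∂(μ ε))
          (𝓝[>] (0:ℝ)))
      (𝓝[>] (0:ℝ)) = 0 := by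
  set L := Filter.liminf (fun ε => (ENNReal.ofReal ε)⁻¹ *
    ∫⁻ x in Metric.closedBall (0 : EuclideanSpace ℝ (Fin d)) R,
      ENNReal.ofReal (‖gradient U x‖ ^ 2) ∂(μ ε)) (𝓝[>] (0:ℝ))
  have hbound : ∀ᶠ r in 𝓝[>] (0:ℝ), Filter.liminf (fun ε => (ENNReal.ofReal ε)⁻¹ *
      ∫⁻ y in Metric.closedBall c r, ENNReal.ofReal (‖y - c‖ ^ 3) ∂(μ ε)) (𝓝[>] (0:ℝ)) ≤
      ENNReal.ofReal (r / b) * L := by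
    filter_upwards [Ioo_mem_nhdsGT hr₁] with r hr
    have hball : Metric.closedBall c r ⊆ Metric.closedBall c r₁ :=
      Metric.closedBall_subset_closedBall hr.2.le
    refine (liminf_le_liminf (Eventually.of_forall fun ε => ?_)).trans
      (ENNReal.liminf_const_mul_le _ ENNReal.ofReal_ne_top)
    rw [mul_left_comm]
    gcongr
    exact (setLIntegral_norm_sub_pow_three_le _ hb fun y hy => hlow y (hball hy)).trans
      (by gcongr; exact hball.trans hsub)
  have hlim : Tendsto (fun r : ℝ => ENNReal.ofReal (r / b) * L) (𝓝[>] 0) (𝓝 0) := by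
    have h : Tendsto (fun r : ℝ => ENNReal.ofReal (r / b)) (𝓝[>] 0) (𝓝 0) := by
      simpa [Function.comp_def] using
        ((ENNReal.continuous_ofReal.comp (continuous_id.div_const b)).tendsto
        (0:ℝ)).mono_left nhdsWithin_le_nhds
    simpa using ENNReal.Tendsto.mul_const h (Or.inr hfin.ne)
  exact le_antisymm ((limsup_le_limsup hbound).trans_eq hlim.limsup_eq) bot_le

/-- Third-moment concentration estimate: under the finiteness of
`liminf_{ε→0⁺} ε⁻¹ ∫_{B_R} |∇U|² dμ_ε` and a quadratic lower bound
`|∇U(y)|² ≥ b|y−c|²` on `B_{r₁}(c) ⊆ B_R`, one has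
`limsup_{r→0⁺} liminf_{ε→0⁺} ε⁻¹ ∫_{B_r(c)} |y−c|³ dμ_ε = 0`. -/
theorem stmt14 {d : ℕ}
    (U : EuclideanSpace ℝ (Fin d) → ℝ) (hU : ContDiff ℝ 1 U)
    (c : EuclideanSpace ℝ (Fin d)) (R r₁ b : ℝ)
    (hR : 0 < R) (hr₁ : 0 < r₁) (hb : 0 < b)
    (hsub : Metric.closedBall c r₁ ⊆
      Metric.closedBall (0 : EuclideanSpace ℝ (Fin d)) R)
    (hlow : ∀ y ∈ Metric.closedBall c r₁, b * ‖y - c‖ ^ 2 ≤ ‖gradient U y‖ ^ 2)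
    (μ : ℝ → Measure (EuclideanSpace ℝ (Fin d)))
    (hμ : ∀ ε : ℝ, 0 < ε → IsProbabilityMeasure (μ ε))
    (hfin : Filter.liminf (fun ε =>
        (ENNReal.ofReal ε)⁻¹ *
          ∫⁻ x in Metric.closedBall (0 : EuclideanSpace ℝ (Fin d)) R,
            ENNReal.ofReal (‖gradient U x‖ ^ 2) ∂(μ ε))
      (𝓝[>] (0:ℝ)) < ⊤) :
    Filter.limsup (fun r =>
        Filter.liminf (fun ε =>
            (ENNReal.ofReal ε)⁻¹ *
              ∫⁻ y in Metric.closedBall c r,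
                ENNReal.ofReal (‖y - c‖ ^ 3) ∂(μ ε))
          (𝓝[>] (0:ℝ)))
      (𝓝[>] (0:ℝ)) = 0 :=
  stmt14_general U c R r₁ b hr₁ hb hsub hlow μ hfin
end
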